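/- arXiv:2306.01275 — 2 statements merged into one kernel-verified Lean document; each statement's English description precedes it below -/
import Mathlib

section
/- For every ω ∈ I^ℕ and every cylinder C_β of K_ω: C_β ∩ K_ω ⊆ ⋃ C_α, where the union runs over cylinders C_α ⊆ C_β with |α| = |β| + 1. Moreover, there is a constant λ > 0, depending only on the finite collection I of IFSs (not on ω), such that for any two distinct cylinders C_{α₁}, C_{α₂} ⊆ C_β with |α₁| = |α₂| = |β| + 1: dist(C_{α₁}, C_{α₂}) ≥ λ · |C_β|, where |C_β| is the diameter of C_β. -/
open Set MeasureTheory Filter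

noncomputable section

/-- The composition `f^{(ω₁)}_{u₁} ∘ ⋯ ∘ f^{(ω_N)}_{u_N}` of the maps of a model of IFSs
`Φ^{(i)} = {f^{(i)}_1, …, f^{(i)}_{k_i}}`, `i ∈ I`, along a word `u ∈ X_N^{(ω)}`. -/
def mwm {ℓ : ℕ} (k : Fin ℓ → ℕ) (g : (i : Fin ℓ) → Fin (k i) → ℝ → ℝ) :
    (N : ℕ) → (w : Fin N → Fin ℓ) → ((j : Fin N) → Fin (k (w j))) → ℝ → ℝ
  | 0, _, _ => id
  | N + 1, w, u => g (w 0) (u 0) ∘ mwm k g N (fun j => w j.succ) (fun j => u j.succ)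

/-- The cylinder `C_u = f^{(ω₁)}_{u₁} ∘ ⋯ ∘ f^{(ω_N)}_{u_N} ([0,1])`. -/
def modelCyl {ℓ : ℕ} (k : Fin ℓ → ℕ) (g : (i : Fin ℓ) → Fin (k i) → ℝ → ℝ)
    (N : ℕ) (w : Fin N → Fin ℓ) (u : (j : Fin N) → Fin (k (w j))) : Set ℝ :=
  mwm k g N w u '' Set.Icc (0:ℝ) 1

/-- The limit set `K_ω = ⋂_N ⋃_{u ∈ X_N^{(ω)}} C_u`. -/
def limitSet {ℓ : ℕ} (k : Fin ℓ → ℕ) (g : (i : Fin ℓ) → Fin (k i) → ℝ → ℝ)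
    (ω : ℕ → Fin ℓ) : Set ℝ :=
  ⋂ N : ℕ, ⋃ u : (j : Fin N) → Fin (k (ω (j : ℕ))), modelCyl k g N (fun j => ω (j : ℕ)) u

/-- The distance between two subsets of `ℝ`. -/
def setDist (S T : Set ℝ) : ℝ := sInf (Set.image2 dist S T)

section Aux

variable {ℓ : ℕ} {k : Fin ℓ → ℕ} {g : (i : Fin ℓ) → Fin (k i) → ℝ → ℝ} {ρ₀ ρ₁ : ℝ}

lemma mwm_contDiff (hsm : ∀ i u, ContDiff ℝ 2 (g i u)) :
    ∀ (N : ℕ) (w : Fin N → Fin ℓ) (u : (j : Fin N) → Fin (k (w j))),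
      ContDiff ℝ 2 (mwm k g N w u)
  | 0, _, _ => contDiff_id
  | N + 1, _, _ => (hsm _ _).comp (mwm_contDiff hsm N _ _)

lemma mwm_mapsTo (hmaps : ∀ i u, Set.MapsTo (g i u) (Set.Icc (0:ℝ) 1) (Set.Icc (0:ℝ) 1)) :
    ∀ (N : ℕ) (w : Fin N → Fin ℓ) (u : (j : Fin N) → Fin (k (w j))),
      Set.MapsTo (mwm k g N w u) (Set.Icc (0:ℝ) 1) (Set.Icc (0:ℝ) 1)
  | 0, _, _ => Set.mapsTo_id _
  | N + 1, _, _ => (hmaps _ _).comp (mwm_mapsTo hmaps N _ _)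

lemma mwm_snoc : ∀ (N : ℕ) (w : Fin (N + 1) → Fin ℓ) (u : (j : Fin (N + 1)) → Fin (k (w j))),
    mwm k g (N + 1) w u =
      mwm k g N (fun j => w j.castSucc) (fun j => u j.castSucc) ∘
        g (w (Fin.last N)) (u (Fin.last N))
  | 0, _, _ => rfl
  | N + 1, w, u => by
    show g (w 0) (u 0) ∘ mwm k g (N+1) (fun j => w j.succ) (fun j => u j.succ) = _
    rw [mwm_snoc N (fun j => w j.succ) (fun j => u j.succ)]
    rfl

lemma deriv_mwm_succ (hsm : ∀ i u, ContDiff ℝ 2 (g i u)) (N : ℕ)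
    (w : Fin (N+1) → Fin ℓ) (u : (j : Fin (N+1)) → Fin (k (w j))) (x : ℝ) :
    deriv (mwm k g (N+1) w u) x =
      deriv (g (w 0) (u 0)) (mwm k g N (fun j => w j.succ) (fun j => u j.succ) x) *
        deriv (mwm k g N (fun j => w j.succ) (fun j => u j.succ)) x :=
  deriv_comp x ((hsm _ _).differentiable two_ne_zero _)
    ((mwm_contDiff hsm N _ _).differentiable two_ne_zero _)

section bounds
variable (hρ₀ : 0 < ρ₀) (hsm : ∀ i u, ContDiff ℝ 2 (g i u))
  (hmaps : ∀ i u, Set.MapsTo (g i u) (Set.Icc (0:ℝ) 1) (Set.Icc (0:ℝ) 1))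
  (hcontr : ∀ i u, ∀ x ∈ Set.Icc (0:ℝ) 1, ρ₀ ≤ |deriv (g i u) x| ∧ |deriv (g i u) x| ≤ ρ₁)

include hρ₀ hsm hmaps hcontr

lemma abs_deriv_mwm_bounds :
    ∀ (N : ℕ) (w : Fin N → Fin ℓ) (u : (j : Fin N) → Fin (k (w j))),
      ∀ x ∈ Set.Icc (0:ℝ) 1,
        ρ₀ ^ N ≤ |deriv (mwm k g N w u) x| ∧ |deriv (mwm k g N w u) x| ≤ ρ₁ ^ N := by
  intro N
  induction N with
  | zero =>
    intro w u x _
    simp [mwm, deriv_id]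
  | succ N ih =>
    intro w u x hx
    have hGx := mwm_mapsTo hmaps N (fun j => w j.succ) (fun j => u j.succ) hx
    have h1 := hcontr (w 0) (u 0) _ hGx
    have h2 := ih (fun j => w j.succ) (fun j => u j.succ) x hx
    rw [deriv_mwm_succ hsm, abs_mul]
    constructor
    · calc ρ₀ ^ (N+1) = ρ₀ * ρ₀ ^ N := by ring
      _ ≤ _ := mul_le_mul h1.1 h2.1 (pow_nonneg hρ₀.le N) (abs_nonneg _)
    · calc |deriv (g (w 0) (u 0)) _| * |deriv (mwm k g N _ _) x| ≤ ρ₁ * ρ₁ ^ N :=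
        mul_le_mul h1.2 h2.2 (abs_nonneg _) ((abs_nonneg _).trans h1.2)
      _ = ρ₁ ^ (N+1) := by ring

lemma mwm_lip (N : ℕ) (w : Fin N → Fin ℓ) (u : (j : Fin N) → Fin (k (w j)))
    {x y : ℝ} (hx : x ∈ Set.Icc (0:ℝ) 1) (hy : y ∈ Set.Icc (0:ℝ) 1) :
    |mwm k g N w u y - mwm k g N w u x| ≤ ρ₁ ^ N * |y - x| := by
  have := Convex.norm_image_sub_le_of_norm_deriv_le
    (f := mwm k g N w u) (C := ρ₁ ^ N) (s := Set.Icc (0:ℝ) 1)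
    (fun z _ => ((mwm_contDiff hsm N w u).differentiable two_ne_zero z))
    (fun z hz => (abs_deriv_mwm_bounds hρ₀ hsm hmaps hcontr N w u z hz).2)
    (convex_Icc 0 1) hx hy
  simpa [Real.norm_eq_abs] using this

/-- log-Lipschitz control of `|g'|` in multiplicative-exponential form. -/
lemma gprime_ratio {c : ℝ} (hc : 0 ≤ c)
    (hlip : ∀ i u, ∀ x ∈ Set.Icc (0:ℝ) 1, ∀ y ∈ Set.Icc (0:ℝ) 1,
      |deriv (g i u) x - deriv (g i u) y| ≤ c * ρ₀ * |x - y|)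
    (i : Fin ℓ) (u : Fin (k i)) {x y : ℝ}
    (hx : x ∈ Set.Icc (0:ℝ) 1) (hy : y ∈ Set.Icc (0:ℝ) 1) :
    |deriv (g i u) x| ≤ Real.exp (c * |x - y|) * |deriv (g i u) y| := by
  have h2 := (hcontr i u y hy).1
  have habs : |deriv (g i u) x| ≤ |deriv (g i u) y| + c * ρ₀ * |x - y| := by
    linarith [abs_sub_abs_le_abs_sub (deriv (g i u) x) (deriv (g i u) y),
      hlip i u x hx y hy]
  have hexp : 1 + c * |x - y| ≤ Real.exp (c * |x - y|) := by
    have := Real.add_one_le_exp (c * |x - y|); linarith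
  calc |deriv (g i u) x| ≤ |deriv (g i u) y| + c * ρ₀ * |x - y| := habs
    _ ≤ |deriv (g i u) y| + c * |deriv (g i u) y| * |x - y| := by
        have : c * ρ₀ * |x - y| ≤ c * |deriv (g i u) y| * |x - y| :=
          mul_le_mul_of_nonneg_right (mul_le_mul_of_nonneg_left h2 hc) (abs_nonneg _)
        linarith
    _ = (1 + c * |x - y|) * |deriv (g i u) y| := by ring
    _ ≤ Real.exp (c * |x - y|) * |deriv (g i u) y| :=
        mul_le_mul_of_nonneg_right hexp (abs_nonneg _)

/-- Bounded distortion for the composed maps. -/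
lemma mwm_distortion (hρ₁0 : 0 ≤ ρ₁) {c : ℝ} (hc : 0 ≤ c)
    (hlip : ∀ i u, ∀ x ∈ Set.Icc (0:ℝ) 1, ∀ y ∈ Set.Icc (0:ℝ) 1,
      |deriv (g i u) x - deriv (g i u) y| ≤ c * ρ₀ * |x - y|) :
    ∀ (N : ℕ) (w : Fin N → Fin ℓ) (u : (j : Fin N) → Fin (k (w j))),
      ∀ x ∈ Set.Icc (0:ℝ) 1, ∀ y ∈ Set.Icc (0:ℝ) 1,
        |deriv (mwm k g N w u) x| ≤
          Real.exp (c * ∑ n ∈ Finset.range N, ρ₁ ^ n) * |deriv (mwm k g N w u) y| := by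
  intro N
  induction N with
  | zero =>
    intro w u x _ y _
    simp [mwm, deriv_id]
  | succ N ih =>
    intro w u x hx y hy
    set G := mwm k g N (fun j => w j.succ) (fun j => u j.succ) with hG
    have hGx := mwm_mapsTo hmaps N (fun j => w j.succ) (fun j => u j.succ) hx
    have hGy := mwm_mapsTo hmaps N (fun j => w j.succ) (fun j => u j.succ) hy
    have hdist : |G x - G y| ≤ ρ₁ ^ N := by
      have h1 := mwm_lip hρ₀ hsm hmaps hcontr N (fun j => w j.succ) (fun j => u j.succ) hy hx
      have hxy : |x - y| ≤ 1 := by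
        rw [abs_sub_le_iff]
        constructor <;> [linarith [hx.1, hx.2, hy.1, hy.2]; linarith [hx.1, hx.2, hy.1, hy.2]]
      calc |G x - G y| ≤ ρ₁ ^ N * |x - y| := h1
        _ ≤ ρ₁ ^ N * 1 := mul_le_mul_of_nonneg_left hxy (pow_nonneg hρ₁0 N)
        _ = ρ₁ ^ N := mul_one _
    have h1 : |deriv (g (w 0) (u 0)) (G x)| ≤
        Real.exp (c * ρ₁ ^ N) * |deriv (g (w 0) (u 0)) (G y)| := by
      have := gprime_ratio hρ₀ hsm hmaps hcontr hc hlip (w 0) (u 0) hGx hGy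
      refine this.trans (mul_le_mul_of_nonneg_right ?_ (abs_nonneg _))
      exact Real.exp_le_exp.mpr (mul_le_mul_of_nonneg_left hdist hc)
    have h2 := ih (fun j => w j.succ) (fun j => u j.succ) x hx y hy
    rw [deriv_mwm_succ hsm, deriv_mwm_succ hsm, abs_mul, abs_mul]
    calc |deriv (g (w 0) (u 0)) (G x)| * |deriv G x|
        ≤ (Real.exp (c * ρ₁ ^ N) * |deriv (g (w 0) (u 0)) (G y)|) *
            (Real.exp (c * ∑ n ∈ Finset.range N, ρ₁ ^ n) * |deriv G y|) :=
          mul_le_mul h1 h2 (abs_nonneg _) (by positivity)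
      _ = Real.exp (c * ∑ n ∈ Finset.range (N+1), ρ₁ ^ n) *
            (|deriv (g (w 0) (u 0)) (G y)| * |deriv G y|) := by
          rw [Finset.sum_range_succ, mul_add, Real.exp_add]; ring

end bounds

lemma g_injOn (hρ₀ : 0 < ρ₀) (hsm : ∀ i u, ContDiff ℝ 2 (g i u))
    (hcontr : ∀ i u, ∀ x ∈ Set.Icc (0:ℝ) 1, ρ₀ ≤ |deriv (g i u) x| ∧ |deriv (g i u) x| ≤ ρ₁)
    (i : Fin ℓ) (u : Fin (k i)) : Set.InjOn (g i u) (Set.Icc (0:ℝ) 1) := by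
  have hcont : Continuous (deriv (g i u)) := (hsm i u).continuous_deriv one_le_two
  have hne : ∀ x ∈ Set.Icc (0:ℝ) 1, deriv (g i u) x ≠ 0 := by
    intro x hx h0
    have := (hcontr i u x hx).1
    rw [h0, abs_zero] at this; linarith
  have hsign : (∀ x ∈ Set.Icc (0:ℝ) 1, 0 < deriv (g i u) x) ∨
      (∀ x ∈ Set.Icc (0:ℝ) 1, deriv (g i u) x < 0) := by
    by_contra h
    push_neg at h
    obtain ⟨⟨a, ha, ha'⟩, ⟨b, hb, hb'⟩⟩ := h
    have ha2 : deriv (g i u) a < 0 := lt_of_le_of_ne ha' (hne a ha)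
    have hb2 : 0 < deriv (g i u) b := lt_of_le_of_ne hb' (Ne.symm (hne b hb))
    rcases le_total a b with hab | hab
    · obtain ⟨z, hz, hz0⟩ := intermediate_value_Icc hab (hcont.continuousOn)
        (⟨ha2.le, hb2.le⟩ : (0:ℝ) ∈ Set.Icc _ _)
      exact hne z ⟨ha.1.trans hz.1, hz.2.trans hb.2⟩ hz0
    · obtain ⟨z, hz, hz0⟩ := intermediate_value_Icc' hab (hcont.continuousOn)
        (⟨ha2.le, hb2.le⟩ : (0:ℝ) ∈ Set.Icc _ _)
      exact hne z ⟨hb.1.trans hz.1, hz.2.trans ha.2⟩ hz0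
  have hcg : ContinuousOn (g i u) (Set.Icc (0:ℝ) 1) := (hsm i u).continuous.continuousOn
  rcases hsign with hpos | hneg
  · exact (strictMonoOn_of_deriv_pos (convex_Icc 0 1) hcg
      (fun x hx => hpos x (interior_subset hx))).injOn
  · exact (strictAntiOn_of_deriv_neg (convex_Icc 0 1) hcg
      (fun x hx => hneg x (interior_subset hx))).injOn

lemma modelCyl_succ_subset (hmaps : ∀ i u, Set.MapsTo (g i u) (Set.Icc (0:ℝ) 1) (Set.Icc (0:ℝ) 1))
    (N : ℕ) (w : Fin (N + 1) → Fin ℓ) (u : (j : Fin (N + 1)) → Fin (k (w j))) :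
    modelCyl k g (N + 1) w u ⊆
      modelCyl k g N (fun j => w j.castSucc) (fun j => u j.castSucc) := by
  rw [modelCyl, mwm_snoc, Set.image_comp]
  exact Set.image_mono ((hmaps _ _).image_subset)

lemma modelCyl_disjoint (hρ₀ : 0 < ρ₀) (hsm : ∀ i u, ContDiff ℝ 2 (g i u))
    (hmaps : ∀ i u, Set.MapsTo (g i u) (Set.Icc (0:ℝ) 1) (Set.Icc (0:ℝ) 1))
    (hcontr : ∀ i u, ∀ x ∈ Set.Icc (0:ℝ) 1, ρ₀ ≤ |deriv (g i u) x| ∧ |deriv (g i u) x| ≤ ρ₁)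
    (hsep : ∀ i, ∀ u v : Fin (k i), u ≠ v →
      Disjoint (g i u '' Set.Icc (0:ℝ) 1) (g i v '' Set.Icc (0:ℝ) 1)) :
    ∀ (N : ℕ) (w : Fin N → Fin ℓ) (u v : (j : Fin N) → Fin (k (w j))), u ≠ v →
      Disjoint (modelCyl k g N w u) (modelCyl k g N w v) := by
  intro N
  induction N with
  | zero => intro w u v huv; exact absurd (funext fun j => j.elim0) huv
  | succ N ih =>
    intro w u v huv
    have hplug : ∀ (z : (j : Fin (N+1)) → Fin (k (w j))),
        modelCyl k g (N+1) w z =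
          g (w 0) (z 0) ''
            (mwm k g N (fun j => w j.succ) (fun j => z j.succ) '' Set.Icc 0 1) := by
      intro z
      rw [modelCyl, show mwm k g (N+1) w z = g (w 0) (z 0) ∘ mwm k g N
        (fun j => w j.succ) (fun j => z j.succ) from rfl, Set.image_comp]
    rw [hplug u, hplug v]
    by_cases h0 : u 0 = v 0
    · have htail : (fun j : Fin N => u j.succ) ≠ (fun j : Fin N => v j.succ) := by
        intro he
        apply huv
        funext j
        refine Fin.cases h0 (fun j' => ?_) j
        exact congrFun he j'
      have hd := ih (fun j => w j.succ) (fun j => u j.succ) (fun j => v j.succ) htail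
      rw [h0]
      have hd' : (mwm k g N (fun j => w j.succ) fun j => u j.succ) '' Set.Icc 0 1 ∩
          (mwm k g N (fun j => w j.succ) fun j => v j.succ) '' Set.Icc 0 1 = ∅ :=
        Set.disjoint_iff_inter_eq_empty.mp hd
      rw [Set.disjoint_iff_inter_eq_empty,
        ← (g_injOn hρ₀ hsm hcontr (w 0) (v 0)).image_inter
          ((mwm_mapsTo hmaps N _ _).image_subset) ((mwm_mapsTo hmaps N _ _).image_subset),
        hd', Set.image_empty]
    · refine (hsep (w 0) (u 0) (v 0) h0).mono ?_ ?_
      · exact Set.image_mono ((mwm_mapsTo hmaps N _ _).image_subset)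
      · exact Set.image_mono ((mwm_mapsTo hmaps N _ _).image_subset)

lemma exists_gap (hℓ : 0 < ℓ) (hk : ∀ i, 0 < k i)
    (hsm : ∀ i u, ContDiff ℝ 2 (g i u))
    (hsep : ∀ i, ∀ u v : Fin (k i), u ≠ v →
      Disjoint (g i u '' Set.Icc (0:ℝ) 1) (g i v '' Set.Icc (0:ℝ) 1)) :
    ∃ δ : ℝ, 0 < δ ∧ ∀ i, ∀ u v : Fin (k i), u ≠ v →
      ∀ x ∈ Set.Icc (0:ℝ) 1, ∀ y ∈ Set.Icc (0:ℝ) 1, δ ≤ |g i u x - g i v y| := by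
  have key : ∀ p : (i : Fin ℓ) × Fin (k i) × Fin (k i), ∃ d : ℝ, 0 < d ∧
      (p.2.1 ≠ p.2.2 → ∀ x ∈ Set.Icc (0:ℝ) 1, ∀ y ∈ Set.Icc (0:ℝ) 1,
        d ≤ |g p.1 p.2.1 x - g p.1 p.2.2 y|) := by
    rintro ⟨i, u, v⟩
    by_cases huv : u = v
    · exact ⟨1, one_pos, fun h => absurd huv h⟩
    · have hA : IsCompact (g i u '' Set.Icc (0:ℝ) 1) :=
        isCompact_Icc.image (hsm i u).continuous
      have hB : IsCompact (g i v '' Set.Icc (0:ℝ) 1) :=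
        isCompact_Icc.image (hsm i v).continuous
      have hAne : (g i u '' Set.Icc (0:ℝ) 1).Nonempty :=
        (Set.nonempty_Icc.mpr zero_le_one).image _
      have hBne : (g i v '' Set.Icc (0:ℝ) 1).Nonempty :=
        (Set.nonempty_Icc.mpr zero_le_one).image _
      obtain ⟨a₀, ha₀, hmin⟩ := hA.exists_isMinOn hAne
        ((Metric.continuous_infDist_pt _).continuousOn)
      have hd : 0 < Metric.infDist a₀ (g i v '' Set.Icc (0:ℝ) 1) := by
        rw [← hB.isClosed.notMem_iff_infDist_pos hBne]
        exact Set.disjoint_left.mp (hsep i u v huv) ha₀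
      refine ⟨_, hd, fun _ x hx y hy => ?_⟩
      calc Metric.infDist a₀ (g i v '' Set.Icc (0:ℝ) 1)
          ≤ Metric.infDist (g i u x) (g i v '' Set.Icc (0:ℝ) 1) :=
            hmin (Set.mem_image_of_mem _ hx)
        _ ≤ dist (g i u x) (g i v y) :=
            Metric.infDist_le_dist_of_mem (Set.mem_image_of_mem _ hy)
        _ = |g i u x - g i v y| := Real.dist_eq _ _
  choose d hd1 hd2 using key
  haveI : Nonempty ((i : Fin ℓ) × Fin (k i) × Fin (k i)) :=
    ⟨⟨⟨0, hℓ⟩, ⟨0, hk _⟩, ⟨0, hk _⟩⟩⟩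
  refine ⟨Finset.univ.inf' Finset.univ_nonempty d, ?_, ?_⟩
  · rw [Finset.lt_inf'_iff]
    exact fun p _ => hd1 p
  · intro i u v huv x hx y hy
    exact le_trans (Finset.inf'_le d (Finset.mem_univ ⟨i, u, v⟩)) (hd2 ⟨i, u, v⟩ huv x hx y hy)

lemma exists_lip (hℓ : 0 < ℓ) (hk : ∀ i, 0 < k i) (hρ₀ : 0 < ρ₀)
    (hsm : ∀ i u, ContDiff ℝ 2 (g i u)) :
    ∃ c : ℝ, 0 ≤ c ∧ ∀ i u, ∀ x ∈ Set.Icc (0:ℝ) 1, ∀ y ∈ Set.Icc (0:ℝ) 1,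
      |deriv (g i u) x - deriv (g i u) y| ≤ c * ρ₀ * |x - y| := by
  have key : ∀ p : (i : Fin ℓ) × Fin (k i), ∃ C : ℝ, 0 ≤ C ∧
      ∀ x ∈ Set.Icc (0:ℝ) 1, ∀ y ∈ Set.Icc (0:ℝ) 1,
        |deriv (g p.1 p.2) x - deriv (g p.1 p.2) y| ≤ C * |x - y| := by
    rintro ⟨i, u⟩
    have hC1 : ContDiff ℝ 1 (deriv (g i u)) := by
      have h2 : ContDiff ℝ (1 + 1) (g i u) := by
        have : ((2:ℕ) : WithTop ℕ∞) = 1 + 1 := by norm_num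
        exact this ▸ (by exact_mod_cast hsm i u)
      exact (contDiff_succ_iff_deriv.mp h2).2.2
    have hcont2 : Continuous (deriv (deriv (g i u))) := hC1.continuous_deriv le_rfl
    obtain ⟨C, hC⟩ := isCompact_Icc.exists_bound_of_continuousOn
      (hcont2.continuousOn (s := Set.Icc (0:ℝ) 1))
    have hC0 : 0 ≤ C := le_trans (norm_nonneg _) (hC 0 (by norm_num))
    refine ⟨C, hC0, fun x hx y hy => ?_⟩
    have := Convex.norm_image_sub_le_of_norm_deriv_le (f := deriv (g i u)) (C := C)
      (s := Set.Icc (0:ℝ) 1)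
      (fun z _ => (hC1.differentiable one_ne_zero) z) hC (convex_Icc 0 1) hy hx
    simpa [Real.norm_eq_abs] using this
  choose C hC0 hC using key
  haveI : Nonempty ((i : Fin ℓ) × Fin (k i)) := ⟨⟨⟨0, hℓ⟩, ⟨0, hk _⟩⟩⟩
  refine ⟨Finset.univ.sup' Finset.univ_nonempty C / ρ₀, ?_, ?_⟩
  · apply div_nonneg _ hρ₀.le
    exact le_trans (hC0 (Classical.arbitrary _)) (Finset.le_sup' C (Finset.mem_univ _))
  · intro i u x hx y hy
    rw [div_mul_cancel₀ _ (ne_of_gt hρ₀)]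
    exact le_trans (hC ⟨i, u⟩ x hx y hy)
      (mul_le_mul_of_nonneg_right (Finset.le_sup' C (Finset.mem_univ ⟨i, u⟩)) (abs_nonneg _))

lemma mvt_abs {F : ℝ → ℝ} (hF : ContDiff ℝ 2 F) {p q : ℝ}
    (hp : p ∈ Set.Icc (0:ℝ) 1) (hq : q ∈ Set.Icc (0:ℝ) 1) :
    ∃ z ∈ Set.Icc (0:ℝ) 1, |F q - F p| = |deriv F z| * |q - p| := by
  rcases lt_trichotomy p q with h | h | h
  · obtain ⟨z, hz, hz'⟩ := exists_deriv_eq_slope F h hF.continuous.continuousOn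
      ((hF.differentiable two_ne_zero).differentiableOn)
    refine ⟨z, ⟨hp.1.trans hz.1.le, hz.2.le.trans hq.2⟩, ?_⟩
    rw [hz', abs_div]
    rw [div_mul_cancel₀]
    exact ne_of_gt (abs_pos.mpr (sub_ne_zero.mpr (ne_of_gt h)))
  · exact ⟨p, hp, by rw [h]; simp⟩
  · obtain ⟨z, hz, hz'⟩ := exists_deriv_eq_slope F h hF.continuous.continuousOn
      ((hF.differentiable two_ne_zero).differentiableOn)
    refine ⟨z, ⟨hq.1.trans hz.1.le, hz.2.le.trans hp.2⟩, ?_⟩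
    rw [abs_sub_comm (F q), hz', abs_div, abs_sub_comm q p,
      div_mul_cancel₀ _ (ne_of_gt (abs_pos.mpr (sub_ne_zero.mpr (ne_of_gt h))))]

end Aux

/-- Lemma 2.11: every cylinder of `K_ω` meets `K_ω` only inside its
children cylinders of the next generation, and distinct children of a common cylinder
`C_β` are `λ |C_β|`-separated, with `λ > 0` uniform in `ω`. -/
theorem cylinder_children_cover_and_gap
    (ℓ : ℕ) (hℓ : 0 < ℓ) (k : Fin ℓ → ℕ) (hk : ∀ i, 0 < k i)
    (g : (i : Fin ℓ) → Fin (k i) → ℝ → ℝ)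
    (hsm : ∀ i u, ContDiff ℝ 2 (g i u))
    (hmaps : ∀ i u, Set.MapsTo (g i u) (Set.Icc (0:ℝ) 1) (Set.Icc (0:ℝ) 1))
    (ρ₀ ρ₁ : ℝ) (hρ₀ : 0 < ρ₀) (hρ₁ : ρ₁ < 1)
    (hcontr : ∀ i u, ∀ x ∈ Set.Icc (0:ℝ) 1, ρ₀ ≤ |deriv (g i u) x| ∧ |deriv (g i u) x| ≤ ρ₁)
    (hsep : ∀ i, ∀ u v : Fin (k i), u ≠ v →
      Disjoint (g i u '' Set.Icc (0:ℝ) 1) (g i v '' Set.Icc (0:ℝ) 1)) :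
    ∃ lam : ℝ, 0 < lam ∧
      ∀ (ω : ℕ → Fin ℓ) (N : ℕ) (β : (j : Fin N) → Fin (k (ω (j : ℕ)))),
        (modelCyl k g N (fun j => ω (j : ℕ)) β ∩ limitSet k g ω ⊆
          ⋃ (α : (j : Fin (N + 1)) → Fin (k (ω (j : ℕ))))
            (_ : modelCyl k g (N + 1) (fun j => ω (j : ℕ)) α ⊆
                  modelCyl k g N (fun j => ω (j : ℕ)) β),
            modelCyl k g (N + 1) (fun j => ω (j : ℕ)) α) ∧
        ∀ α₁ α₂ : (j : Fin (N + 1)) → Fin (k (ω (j : ℕ))), α₁ ≠ α₂ →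
          modelCyl k g (N + 1) (fun j => ω (j : ℕ)) α₁ ⊆
            modelCyl k g N (fun j => ω (j : ℕ)) β →
          modelCyl k g (N + 1) (fun j => ω (j : ℕ)) α₂ ⊆
            modelCyl k g N (fun j => ω (j : ℕ)) β →
          lam * Metric.diam (modelCyl k g N (fun j => ω (j : ℕ)) β) ≤
            setDist (modelCyl k g (N + 1) (fun j => ω (j : ℕ)) α₁)
              (modelCyl k g (N + 1) (fun j => ω (j : ℕ)) α₂) := by
  obtain ⟨δ, hδ, hgap⟩ := exists_gap hℓ hk hsm hsep
  obtain ⟨c, hc, hlip⟩ := exists_lip hℓ hk hρ₀ hsm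
  have hρ₁0 : 0 < ρ₁ := by
    have := hcontr ⟨0, hℓ⟩ ⟨0, hk _⟩ 0 (by norm_num)
    linarith [this.1, this.2]
  have h1ρ : 0 < 1 - ρ₁ := by linarith
  set E := c / (1 - ρ₁) with hE
  have hE0 : 0 ≤ E := div_nonneg hc h1ρ.le
  have hsumE : ∀ N : ℕ, c * ∑ n ∈ Finset.range N, ρ₁ ^ n ≤ E := by
    intro N
    have hg : ∑ n ∈ Finset.range N, ρ₁ ^ n ≤ 1 / (1 - ρ₁) := by
      rw [geom_sum_eq (ne_of_lt hρ₁)]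
      have h2 : (ρ₁ ^ N - 1) / (ρ₁ - 1) = (1 - ρ₁ ^ N) / (1 - ρ₁) := by
        rw [← neg_div_neg_eq]; ring_nf
      rw [h2]
      exact (div_le_div_iff_of_pos_right h1ρ).mpr (by linarith [pow_nonneg hρ₁0.le N])
    calc c * ∑ n ∈ Finset.range N, ρ₁ ^ n ≤ c * (1 / (1 - ρ₁)) :=
        mul_le_mul_of_nonneg_left hg hc
      _ = E := by rw [hE]; ring
  -- the uniform distortion bound
  have hdistort : ∀ (N : ℕ) (w : Fin N → Fin ℓ) (u : (j : Fin N) → Fin (k (w j))),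
      ∀ x ∈ Set.Icc (0:ℝ) 1, ∀ y ∈ Set.Icc (0:ℝ) 1,
        |deriv (mwm k g N w u) x| ≤ Real.exp E * |deriv (mwm k g N w u) y| := by
    intro N w u x hx y hy
    refine (mwm_distortion hρ₀ hsm hmaps hcontr hρ₁0.le hc hlip N w u x hx y hy).trans ?_
    exact mul_le_mul_of_nonneg_right (Real.exp_le_exp.mpr (hsumE N)) (abs_nonneg _)
  refine ⟨Real.exp (-(2 * E)) * δ, by positivity, ?_⟩
  intro ω N β
  constructor
  · -- the covering statement
    rintro x ⟨hxβ, hxK⟩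
    have hxK' : x ∈ ⋂ M : ℕ, ⋃ u : (j : Fin M) → Fin (k (ω (j : ℕ))),
        modelCyl k g M (fun j => ω (j : ℕ)) u := hxK
    obtain ⟨α, hxα⟩ := Set.mem_iUnion.mp (Set.mem_iInter.mp hxK' (N + 1))
    have hsub : modelCyl k g (N + 1) (fun j => ω (j : ℕ)) α ⊆
        modelCyl k g N (fun j => ω (j : ℕ)) (fun j => α j.castSucc) :=
      modelCyl_succ_subset hmaps N _ α
    by_cases hpe : (fun j : Fin N => α j.castSucc) = β
    · exact Set.mem_iUnion₂.mpr ⟨α, hpe ▸ hsub, hxα⟩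
    · have hdisj := modelCyl_disjoint hρ₀ hsm hmaps hcontr hsep N
        (fun j => ω (j : ℕ)) _ β hpe
      exact absurd hxβ (Set.disjoint_left.mp hdisj (hsub hxα)).elim
  · -- the gap statement
    intro α₁ α₂ hne h1 h2
    have hcne : ∀ (M : ℕ) (w : Fin M → Fin ℓ) (u : (j : Fin M) → Fin (k (w j))),
        (modelCyl k g M w u).Nonempty :=
      fun M w u => (Set.nonempty_Icc.mpr zero_le_one).image _
    have hpre : ∀ α : (j : Fin (N + 1)) → Fin (k (ω (j : ℕ))),
        modelCyl k g (N + 1) (fun j => ω (j : ℕ)) α ⊆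
          modelCyl k g N (fun j => ω (j : ℕ)) β →
        (fun j : Fin N => α j.castSucc) = β := by
      intro α hα
      by_contra hpe
      have hdisj := modelCyl_disjoint hρ₀ hsm hmaps hcontr hsep N
        (fun j => ω (j : ℕ)) _ β hpe
      obtain ⟨x, hx⟩ := hcne (N + 1) (fun j => ω (j : ℕ)) α
      exact Set.disjoint_left.mp hdisj (modelCyl_succ_subset hmaps N _ α hx) (hα hx)
    have hpre₁ := hpre α₁ h1
    have hpre₂ := hpre α₂ h2
    have hlast : α₁ (Fin.last N) ≠ α₂ (Fin.last N) := by
      intro he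
      apply hne
      funext j
      refine Fin.lastCases he (fun j' => ?_) j
      exact (congrFun hpre₁ j').trans (congrFun hpre₂ j').symm
    subst hpre₁
    set F := mwm k g N (fun j : Fin N => ω (j : ℕ)) (fun j => α₁ j.castSucc) with hF
    have hFc : ContDiff ℝ 2 F := mwm_contDiff hsm N _ _
    have e1 : modelCyl k g (N + 1) (fun j => ω (j : ℕ)) α₁ =
        F '' (g (ω N) (α₁ (Fin.last N)) '' Set.Icc 0 1) := by
      show mwm k g (N + 1) (fun j => ω (j : ℕ)) α₁ '' Set.Icc 0 1 = _
      rw [mwm_snoc, Set.image_comp]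
      rfl
    have e2 : modelCyl k g (N + 1) (fun j => ω (j : ℕ)) α₂ =
        F '' (g (ω N) (α₂ (Fin.last N)) '' Set.Icc 0 1) := by
      show mwm k g (N + 1) (fun j => ω (j : ℕ)) α₂ '' Set.Icc 0 1 = _
      rw [mwm_snoc, hpre₂, Set.image_comp]
      rfl
    have h0mem : (0:ℝ) ∈ Set.Icc (0:ℝ) 1 := by norm_num
    have hzb := abs_deriv_mwm_bounds hρ₀ hsm hmaps hcontr N
      (fun j : Fin N => ω (j : ℕ)) (fun j => α₁ j.castSucc) 0 h0mem
    have hF0 : 0 < |deriv F 0| := lt_of_lt_of_le (by positivity) hzb.1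
    -- diameter bound
    have hdiam : Metric.diam (modelCyl k g N (fun j => ω (j : ℕ)) (fun j => α₁ j.castSucc)) ≤
        Real.exp E * |deriv F 0| := by
      apply Metric.diam_le_of_forall_dist_le (by positivity)
      rintro x ⟨p, hp, rfl⟩ y ⟨q, hq, rfl⟩
      obtain ⟨z, hz, hzeq⟩ := mvt_abs hFc hq hp
      have hpq1 : |p - q| ≤ 1 := by
        rw [abs_sub_le_iff]
        constructor <;> linarith [hp.1, hp.2, hq.1, hq.2]
      calc dist (F p) (F q) = |F p - F q| := Real.dist_eq _ _
        _ = |deriv F z| * |p - q| := hzeq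
        _ ≤ (Real.exp E * |deriv F 0|) * 1 :=
            mul_le_mul (hdistort N _ _ z hz 0 h0mem) hpq1 (abs_nonneg _) (by positivity)
        _ = Real.exp E * |deriv F 0| := mul_one _
    -- distance lower bound
    have hsd : Real.exp (-E) * |deriv F 0| * δ ≤
        setDist (modelCyl k g (N + 1) (fun j => ω (j : ℕ)) α₁)
          (modelCyl k g (N + 1) (fun j => ω (j : ℕ)) α₂) := by
      apply le_csInf (Set.Nonempty.image2 (hcne _ _ _) (hcne _ _ _))
      rintro b ⟨x, hx, y, hy, rfl⟩
      rw [e1] at hx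
      rw [e2] at hy
      obtain ⟨p, hpJ, rfl⟩ := hx
      obtain ⟨q, hqJ, rfl⟩ := hy
      obtain ⟨a, ha, rfl⟩ := hpJ
      obtain ⟨b', hb', rfl⟩ := hqJ
      have hp : g (ω N) (α₁ (Fin.last N)) a ∈ Set.Icc (0:ℝ) 1 := hmaps _ _ ha
      have hq : g (ω N) (α₂ (Fin.last N)) b' ∈ Set.Icc (0:ℝ) 1 := hmaps _ _ hb'
      have hδpq : δ ≤ |g (ω N) (α₁ (Fin.last N)) a - g (ω N) (α₂ (Fin.last N)) b'| :=
        hgap (ω N) _ _ hlast a ha b' hb'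
      obtain ⟨z, hz, hzeq⟩ := mvt_abs hFc hq hp
      have hzlow : Real.exp (-E) * |deriv F 0| ≤ |deriv F z| := by
        have := hdistort N (fun j : Fin N => ω (j : ℕ)) (fun j => α₁ j.castSucc) 0 h0mem z hz
        rw [Real.exp_neg]
        rw [inv_mul_le_iff₀ (Real.exp_pos E)]
        exact this
      calc Real.exp (-E) * |deriv F 0| * δ
          ≤ |deriv F z| * |g (ω N) (α₁ (Fin.last N)) a - g (ω N) (α₂ (Fin.last N)) b'| :=
            mul_le_mul hzlow hδpq hδ.le (abs_nonneg _)
        _ = dist (F (g (ω N) (α₁ (Fin.last N)) a)) (F (g (ω N) (α₂ (Fin.last N)) b')) := by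
            rw [Real.dist_eq, ← hzeq]
    -- combine
    have hexp : Real.exp (-(2 * E)) * Real.exp E = Real.exp (-E) := by
      rw [← Real.exp_add]; ring_nf
    calc Real.exp (-(2 * E)) * δ *
          Metric.diam (modelCyl k g N (fun j => ω (j : ℕ)) (fun j => α₁ j.castSucc))
        ≤ Real.exp (-(2 * E)) * δ * (Real.exp E * |deriv F 0|) :=
          mul_le_mul_of_nonneg_left hdiam (by positivity)
      _ = Real.exp (-E) * |deriv F 0| * δ := by rw [← hexp]; ring
      _ ≤ _ := hsd
end
end

section
/- For every D > 1 there exists a constant C_D > 0, depending only on D and on the finite collection of IFSs and probability vectors (not on ω), such that for every ω ∈ I^ℕ, every x ∈ supp(μ_ω) and every r > 0: μ_ω(B(x, Dr)) ≤ C_D · μ_ω(B(x, r)). -/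
open Set MeasureTheory Filter

noncomputable section

namespace FedererAux

/-- Lagrange MVT, convenient form. -/
lemma mvt_uIcc (f : ℝ → ℝ) (h : ContDiff ℝ 1 f) (a b : ℝ) :
    ∃ ξ ∈ uIcc a b, f b - f a = deriv f ξ * (b - a) := by
  have hd : Differentiable ℝ f := h.differentiable one_ne_zero
  rcases lt_trichotomy a b with hab | rfl | hab
  · obtain ⟨c, hc, hc2⟩ := exists_deriv_eq_slope f hab h.continuous.continuousOn
      (fun x _ => (hd x).differentiableWithinAt)
    refine ⟨c, ?_, ?_⟩
    · rw [uIcc_of_le hab.le]; exact Ioo_subset_Icc_self hc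
    · rw [hc2]; rw [div_mul_cancel₀]; linarith
  · exact ⟨a, by simp, by ring⟩
  · obtain ⟨c, hc, hc2⟩ := exists_deriv_eq_slope f hab h.continuous.continuousOn
      (fun x _ => (hd x).differentiableWithinAt)
    refine ⟨c, ?_, ?_⟩
    · rw [uIcc_of_ge hab.le]; exact Ioo_subset_Icc_self hc
    · rw [hc2]; have h0 : a - b ≠ 0 := by linarith
      field_simp; ring

variable {ℓ : ℕ} {k : Fin ℓ → ℕ}

/-- Iterated composition of the IFS maps along `ω`, word `U`, innermost letter last. -/
def itf (g : (i : Fin ℓ) → Fin (k i) → ℝ → ℝ) (ω : ℕ → Fin ℓ)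
    (U : (j : ℕ) → Fin (k (ω j))) : ℕ → ℝ → ℝ
  | 0 => id
  | n + 1 => itf g ω U n ∘ g (ω n) (U n)

variable (g : (i : Fin ℓ) → Fin (k i) → ℝ → ℝ)

lemma itf_first (ω : ℕ → Fin ℓ) (U : (j : ℕ) → Fin (k (ω j))) (n : ℕ) :
    itf g ω U (n + 1) =
      g (ω 0) (U 0) ∘ itf g (fun j => ω (j + 1)) (fun j => U (j + 1)) n := by
  induction n with
  | zero => rfl
  | succ n ih =>
    show itf g ω U (n+1) ∘ g (ω (n+1)) (U (n+1)) = _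
    rw [ih]; rfl

lemma itf_split (ω : ℕ → Fin ℓ) (U : (j : ℕ) → Fin (k (ω j))) (j : ℕ) :
    ∀ t, itf g ω U (j + t) =
      itf g ω U j ∘ itf g (fun l => ω (j + l)) (fun l => U (j + l)) t := by
  intro t
  induction t with
  | zero => rfl
  | succ t ih =>
    show itf g ω U (j + t) ∘ g (ω (j + t)) (U (j + t)) = _
    rw [ih]; rfl

lemma itf_congr (ω : ℕ → Fin ℓ) (U V : (j : ℕ) → Fin (k (ω j))) (n : ℕ)
    (h : ∀ l, l < n → U l = V l) : itf g ω U n = itf g ω V n := by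
  induction n with
  | zero => rfl
  | succ n ih =>
    show itf g ω U n ∘ g (ω n) (U n) = itf g ω V n ∘ g (ω n) (V n)
    rw [ih (fun l hl => h l (hl.trans n.lt_succ_self)), h n n.lt_succ_self]

section Analytic

variable {ρ₀ ρ₁ : ℝ}
variable (hsm : ∀ i u, ContDiff ℝ 2 (g i u))
variable (hmaps : ∀ i u, Set.MapsTo (g i u) (Set.Icc (0:ℝ) 1) (Set.Icc (0:ℝ) 1))
variable (hρ₀ : 0 < ρ₀)
variable (hcontr : ∀ i u, ∀ x ∈ Set.Icc (0:ℝ) 1,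
  ρ₀ ≤ |deriv (g i u) x| ∧ |deriv (g i u) x| ≤ ρ₁)

lemma uIcc_sub_Icc {a b : ℝ} (ha : a ∈ Icc (0:ℝ) 1) (hb : b ∈ Icc (0:ℝ) 1) :
    uIcc a b ⊆ Icc (0:ℝ) 1 := by
  rw [uIcc]
  intro z hz
  constructor
  · exact le_trans (le_inf ha.1 hb.1) hz.1
  · exact le_trans hz.2 (sup_le ha.2 hb.2)

include hsm hcontr in
lemma onestep (i : Fin ℓ) (u : Fin (k i)) {a b : ℝ} (ha : a ∈ Icc (0:ℝ) 1)
    (hb : b ∈ Icc (0:ℝ) 1) :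
    ρ₀ * |b - a| ≤ |g i u b - g i u a| ∧ |g i u b - g i u a| ≤ ρ₁ * |b - a| := by
  obtain ⟨ξ, hξ, he⟩ := mvt_uIcc (g i u) ((hsm i u).of_le (by norm_num)) a b
  have hξI : ξ ∈ Icc (0:ℝ) 1 := uIcc_sub_Icc ha hb hξ
  obtain ⟨h1, h2⟩ := hcontr i u ξ hξI
  rw [he, abs_mul]
  constructor
  · exact mul_le_mul_of_nonneg_right h1 (abs_nonneg _)
  · exact mul_le_mul_of_nonneg_right h2 (abs_nonneg _)

include hmaps in
lemma itf_mapsTo (ω : ℕ → Fin ℓ) (U : (j : ℕ) → Fin (k (ω j))) (n : ℕ) :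
    Set.MapsTo (itf g ω U n) (Icc (0:ℝ) 1) (Icc (0:ℝ) 1) := by
  induction n with
  | zero => exact fun x hx => hx
  | succ n ih => exact ih.comp (hmaps (ω n) (U n))

include hsm hmaps hρ₀ hcontr in
lemma itf_bound (ω : ℕ → Fin ℓ) (U : (j : ℕ) → Fin (k (ω j))) (n : ℕ)
    {a b : ℝ} (ha : a ∈ Icc (0:ℝ) 1) (hb : b ∈ Icc (0:ℝ) 1) :
    ρ₀ ^ n * |b - a| ≤ |itf g ω U n b - itf g ω U n a| ∧
      |itf g ω U n b - itf g ω U n a| ≤ ρ₁ ^ n * |b - a| := by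
  induction n generalizing a b with
  | zero => simp [itf]
  | succ n ih =>
    have hga := (hmaps (ω n) (U n)) ha
    have hgb := (hmaps (ω n) (U n)) hb
    obtain ⟨h1, h2⟩ := onestep g hsm hcontr (ω n) (U n) ha hb
    obtain ⟨ih1, ih2⟩ := ih hga hgb
    have hρ₁0 : (0:ℝ) ≤ ρ₁ := le_trans (le_trans hρ₀.le ((hcontr (ω n) (U n) 0 (by norm_num)).1)) ((hcontr (ω n) (U n) 0 (by norm_num)).2)
    constructor
    · calc ρ₀ ^ (n+1) * |b - a| = ρ₀ ^ n * (ρ₀ * |b - a|) := by ring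
        _ ≤ ρ₀ ^ n * |g (ω n) (U n) b - g (ω n) (U n) a| :=
            mul_le_mul_of_nonneg_left h1 (pow_nonneg hρ₀.le n)
        _ ≤ _ := ih1
    · calc |itf g ω U (n+1) b - itf g ω U (n+1) a|
          = |itf g ω U n (g (ω n) (U n) b) - itf g ω U n (g (ω n) (U n) a)| := rfl
        _ ≤ ρ₁ ^ n * |g (ω n) (U n) b - g (ω n) (U n) a| := ih2
        _ ≤ ρ₁ ^ n * (ρ₁ * |b - a|) := mul_le_mul_of_nonneg_left h2 (pow_nonneg hρ₁0 n)
        _ = ρ₁ ^ (n+1) * |b - a| := by ring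

lemma abs_sub_le_one_of_Icc {a b : ℝ} (ha : a ∈ Icc (0:ℝ) 1) (hb : b ∈ Icc (0:ℝ) 1) :
    |a - b| ≤ 1 := by
  rw [abs_sub_le_iff]; constructor <;> [linarith [ha.2, hb.1]; linarith [hb.2, ha.1]]

lemma dist_of_uIcc {ξ η a b c d M : ℝ} (hξ : ξ ∈ uIcc a b) (hη : η ∈ uIcc c d)
    (h1 : |a - c| ≤ M) (h2 : |a - d| ≤ M) (h3 : |b - c| ≤ M) (h4 : |b - d| ≤ M) :
    |ξ - η| ≤ M := by
  rw [uIcc] at hξ hη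
  have l1 : a ⊓ b ≤ ξ := hξ.1
  have l2 : ξ ≤ a ⊔ b := hξ.2
  have l3 : c ⊓ d ≤ η := hη.1
  have l4 : η ≤ c ⊔ d := hη.2
  rw [abs_sub_le_iff]
  constructor
  · rcases max_choice a b with h | h <;> rcases min_choice c d with h' | h' <;>
      rw [h] at l2 <;> rw [h'] at l3 <;>
      linarith [le_abs_self (a - c), le_abs_self (a - d), le_abs_self (b - c),
        le_abs_self (b - d), h1, h2, h3, h4]
  · rcases max_choice c d with h | h <;> rcases min_choice a b with h' | h' <;>
      rw [h] at l4 <;> rw [h'] at l1 <;>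
      linarith [neg_abs_le (a - c), neg_abs_le (a - d), neg_abs_le (b - c),
        neg_abs_le (b - d), h1, h2, h3, h4]

include hsm hmaps hρ₀ hcontr in
lemma itf_distortion (K : ℝ) (hK : 0 ≤ K)
    (hlip : ∀ i u, ∀ x ∈ Icc (0:ℝ) 1, ∀ y ∈ Icc (0:ℝ) 1,
      |deriv (g i u) x - deriv (g i u) y| ≤ K * |x - y|)
    (n : ℕ) (ω : ℕ → Fin ℓ) (U : (j : ℕ) → Fin (k (ω j)))
    {a b c d : ℝ} (ha : a ∈ Icc (0:ℝ) 1) (hb : b ∈ Icc (0:ℝ) 1)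
    (hc : c ∈ Icc (0:ℝ) 1) (hd : d ∈ Icc (0:ℝ) 1) {t : ℝ} (ht : 0 ≤ t)
    (hab : |a - b| ≤ t * |c - d|) :
    |itf g ω U n a - itf g ω U n b| ≤
      Real.exp (K / ρ₀ * ∑ i ∈ Finset.range n, ρ₁ ^ i) * t *
        |itf g ω U n c - itf g ω U n d| := by
  induction n generalizing ω U a b c d t with
  | zero => simpa [itf] using hab
  | succ n ih =>
    rw [itf_first]
    set ω' := fun j => ω (j + 1) with hω'
    set U' : (j : ℕ) → Fin (k (ω' j)) := fun j => U (j + 1) with hU'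
    set G := itf g ω' U' n with hG
    set g₀ := g (ω 0) (U 0) with hg₀
    have hmapsG := itf_mapsTo g hmaps ω' U' n
    have hGa := hmapsG ha; have hGb := hmapsG hb
    have hGc := hmapsG hc; have hGd := hmapsG hd
    have hEpos : (0:ℝ) < Real.exp (K / ρ₀ * ∑ i ∈ Finset.range (n+1), ρ₁ ^ i) :=
      Real.exp_pos _
    by_cases hcd : G c = G d
    · have hlow := (itf_bound g hsm hmaps hρ₀ hcontr ω' U' n hc hd).1
      rw [show itf g ω' U' n d - itf g ω' U' n c = G d - G c from rfl,
        show G d - G c = 0 by rw [hcd]; ring, abs_zero] at hlow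
      have hdc0 : |d - c| = 0 := by nlinarith [pow_pos hρ₀ n, abs_nonneg (d - c)]
      have hdc : d = c := by have := abs_eq_zero.mp hdc0; linarith
      have hab0 : |a - b| = 0 := by
        apply le_antisymm _ (abs_nonneg _)
        calc |a - b| ≤ t * |c - d| := hab
          _ = 0 := by rw [hdc]; simp
      have hab' : a = b := by have := abs_eq_zero.mp hab0; linarith
      subst hab'
      simp only [Function.comp, sub_self, abs_zero]
      positivity
    · by_cases hGab : G a = G b
      · have : (g₀ ∘ G) a - (g₀ ∘ G) b = 0 := by simp [Function.comp, hGab]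
        rw [this, abs_zero]
        positivity
      · obtain ⟨ξ, hξ, heξ⟩ := mvt_uIcc g₀ ((hsm (ω 0) (U 0)).of_le (by norm_num)) (G b) (G a)
        obtain ⟨η, hη, heη⟩ := mvt_uIcc g₀ ((hsm (ω 0) (U 0)).of_le (by norm_num)) (G d) (G c)
        have hξI : ξ ∈ Icc (0:ℝ) 1 := uIcc_sub_Icc hGb hGa hξ
        have hηI : η ∈ Icc (0:ℝ) 1 := uIcc_sub_Icc hGd hGc hη
        have hbnd : ∀ x ∈ Icc (0:ℝ) 1, ∀ y ∈ Icc (0:ℝ) 1, |G x - G y| ≤ ρ₁ ^ n := by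
          intro x hx y hy
          have := (itf_bound g hsm hmaps hρ₀ hcontr ω' U' n hy hx).2
          calc |G x - G y| ≤ ρ₁ ^ n * |x - y| := this
            _ ≤ ρ₁ ^ n * 1 := by
                have hρ₁0 : (0:ℝ) ≤ ρ₁ :=
                  le_trans (le_trans hρ₀.le ((hcontr (ω 0) (U 0) 0 (by norm_num)).1))
                    ((hcontr (ω 0) (U 0) 0 (by norm_num)).2)
                exact mul_le_mul_of_nonneg_left (abs_sub_le_one_of_Icc hx hy)
                  (pow_nonneg hρ₁0 n)
            _ = ρ₁ ^ n := mul_one _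
        have hξη : |ξ - η| ≤ ρ₁ ^ n :=
          dist_of_uIcc hξ hη (hbnd b hb d hd) (hbnd b hb c hc)
            (hbnd a ha d hd) (hbnd a ha c hc)
        have hηlb : ρ₀ ≤ |deriv g₀ η| := (hcontr (ω 0) (U 0) η hηI).1
        have hder : |deriv g₀ ξ| ≤ |deriv g₀ η| * Real.exp (K / ρ₀ * ρ₁ ^ n) := by
          have h1 : |deriv g₀ ξ| ≤ |deriv g₀ η| + K * |ξ - η| := by
            have := hlip (ω 0) (U 0) ξ hξI η hηI
            have h2 := abs_sub_abs_le_abs_sub (deriv g₀ ξ) (deriv g₀ η)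
            linarith
          have h3 : K * |ξ - η| ≤ |deriv g₀ η| * (K / ρ₀ * ρ₁ ^ n) := by
            rw [div_mul_eq_mul_div, mul_comm (|deriv g₀ η|), div_mul_eq_mul_div]
            rw [le_div_iff₀ hρ₀]
            have e1 : K * |ξ - η| ≤ K * ρ₁ ^ n := mul_le_mul_of_nonneg_left hξη hK
            calc K * |ξ - η| * ρ₀ ≤ K * ρ₁ ^ n * ρ₀ :=
                  mul_le_mul_of_nonneg_right e1 hρ₀.le
              _ ≤ K * ρ₁ ^ n * |deriv g₀ η| :=
                  mul_le_mul_of_nonneg_left hηlb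
                    (mul_nonneg hK (le_trans (abs_nonneg (ξ - η)) hξη))
          have h4 : |deriv g₀ η| * (1 + K / ρ₀ * ρ₁ ^ n) ≤
              |deriv g₀ η| * Real.exp (K / ρ₀ * ρ₁ ^ n) :=
            mul_le_mul_of_nonneg_left (Real.add_one_le_exp _|>.trans_eq' (by ring))
              (abs_nonneg _)
          calc |deriv g₀ ξ| ≤ |deriv g₀ η| + K * |ξ - η| := h1
            _ ≤ |deriv g₀ η| * (1 + K / ρ₀ * ρ₁ ^ n) := by
                rw [mul_add, mul_one]; linarith
            _ ≤ _ := h4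
        have hIH := ih ω' U' ha hb hc hd ht hab
        have hFab : |(g₀ ∘ G) a - (g₀ ∘ G) b| = |deriv g₀ ξ| * |G a - G b| := by
          simp only [Function.comp]
          rw [heξ, abs_mul]
        have hFcd : |(g₀ ∘ G) c - (g₀ ∘ G) d| = |deriv g₀ η| * |G c - G d| := by
          simp only [Function.comp]
          rw [heη, abs_mul]
        rw [hFab, hFcd]
        calc |deriv g₀ ξ| * |G a - G b|
            ≤ (|deriv g₀ η| * Real.exp (K / ρ₀ * ρ₁ ^ n)) *
              (Real.exp (K / ρ₀ * ∑ i ∈ Finset.range n, ρ₁ ^ i) * t * |G c - G d|) := by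
              apply mul_le_mul hder hIH (abs_nonneg _)
              positivity
          _ = Real.exp (K / ρ₀ * ∑ i ∈ Finset.range (n+1), ρ₁ ^ i) * t *
              (|deriv g₀ η| * |G c - G d|) := by
              rw [Finset.sum_range_succ, mul_add, Real.exp_add]
              ring

include hsm hρ₀ hcontr in
lemma g_injOn (i : Fin ℓ) (u : Fin (k i)) : Set.InjOn (g i u) (Icc (0:ℝ) 1) := by
  intro a ha b hb hgab
  have := (onestep g hsm hcontr i u ha hb).1
  rw [show g i u b - g i u a = 0 by rw [hgab]; ring, abs_zero] at this
  have : |b - a| = 0 := by nlinarith [abs_nonneg (b - a)]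
  have := abs_eq_zero.mp this; linarith

include hsm in
lemma itf_continuous (ω : ℕ → Fin ℓ) (U : (j : ℕ) → Fin (k (ω j))) (n : ℕ) :
    Continuous (itf g ω U n) := by
  induction n with
  | zero => exact continuous_id
  | succ n ih => exact ih.comp (hsm (ω n) (U n)).continuous

include hsm in
lemma itf_image_compact (ω : ℕ → Fin ℓ) (U : (j : ℕ) → Fin (k (ω j))) (n : ℕ) :
    IsCompact (itf g ω U n '' Icc (0:ℝ) 1) :=
  isCompact_Icc.image (itf_continuous g hsm ω U n)

include hmaps in
lemma itf_image_nested (ω : ℕ → Fin ℓ) (U : (j : ℕ) → Fin (k (ω j))) {m n : ℕ}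
    (h : m ≤ n) : itf g ω U n '' Icc (0:ℝ) 1 ⊆ itf g ω U m '' Icc (0:ℝ) 1 := by
  obtain ⟨t, rfl⟩ := Nat.exists_eq_add_of_le h
  rw [itf_split g ω U m t, Set.image_comp]
  exact Set.image_mono (Set.mapsTo_iff_image_subset.mp
    (itf_mapsTo g hmaps (fun l => ω (m + l)) (fun l => U (m + l)) t))

include hsm hmaps hρ₀ hcontr in
lemma word_unique (hsep : ∀ i, ∀ u v : Fin (k i), u ≠ v →
      Disjoint (g i u '' Set.Icc (0:ℝ) 1) (g i v '' Set.Icc (0:ℝ) 1))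
    (n : ℕ) : ∀ (ω : ℕ → Fin ℓ) (U V : (j : ℕ) → Fin (k (ω j))) (x : ℝ),
    x ∈ itf g ω U n '' Icc (0:ℝ) 1 → x ∈ itf g ω V n '' Icc (0:ℝ) 1 →
    ∀ l, l < n → U l = V l := by
  induction n with
  | zero => intro _ _ _ _ _ _ l hl; omega
  | succ n ih =>
    intro ω U V x hU hV l hl
    rw [itf_first, Set.image_comp] at hU hV
    set ω' := fun j => ω (j + 1)
    set U' : (j : ℕ) → Fin (k (ω' j)) := fun j => U (j + 1)
    set V' : (j : ℕ) → Fin (k (ω' j)) := fun j => V (j + 1)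
    obtain ⟨ξ, hξ, hxξ⟩ := hU
    obtain ⟨η, hη, hxη⟩ := hV
    have hξI : ξ ∈ Icc (0:ℝ) 1 := by
      obtain ⟨z, hz, rfl⟩ := hξ
      exact itf_mapsTo g hmaps ω' U' n hz
    have hηI : η ∈ Icc (0:ℝ) 1 := by
      obtain ⟨z, hz, rfl⟩ := hη
      exact itf_mapsTo g hmaps ω' V' n hz
    have h00 : U 0 = V 0 := by
      by_contra hne
      exact Set.disjoint_left.mp (hsep (ω 0) (U 0) (V 0) hne)
        ⟨ξ, hξI, hxξ⟩ ⟨η, hηI, by rw [hxη]⟩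
    have hξη : ξ = η := by
      apply g_injOn g hsm hρ₀ hcontr (ω 0) (U 0) hξI hηI
      rw [hxξ, h00, hxη]
    cases l with
    | zero => exact h00
    | succ l' =>
      have hih := ih ω' U' V' ξ hξ (hξη ▸ hη)
      exact hih l' (by omega)


variable (hk : ∀ i, 0 < k i)

/-- The union of all cylinders of generation `n`. -/
def cylT (g : (i : Fin ℓ) → Fin (k i) → ℝ → ℝ) (ω : ℕ → Fin ℓ) (n : ℕ) : Set ℝ :=
  ⋃ U : (j : ℕ) → Fin (k (ω j)), itf g ω U n '' Icc (0:ℝ) 1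

include hk in
lemma cylT_zero (ω : ℕ → Fin ℓ) : cylT g ω 0 = Icc (0:ℝ) 1 := by
  haveI : Nonempty ((j : ℕ) → Fin (k (ω j))) := ⟨fun j => ⟨0, hk (ω j)⟩⟩
  simp [cylT, itf, Set.iUnion_const]

lemma cylT_succ (ω : ℕ → Fin ℓ) (n : ℕ) :
    cylT g ω (n + 1) =
      ⋃ v : Fin (k (ω 0)), g (ω 0) v '' cylT g (fun j => ω (j + 1)) n := by
  ext x
  simp only [cylT, mem_iUnion]
  constructor
  · rintro ⟨U, hx⟩
    rw [itf_first, Set.image_comp] at hx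
    obtain ⟨ξ, hξ, rfl⟩ := hx
    exact ⟨U 0, ξ, mem_iUnion.mpr ⟨fun j => U (j + 1), hξ⟩, rfl⟩
  · rintro ⟨v, ξ, hξ, rfl⟩
    obtain ⟨V, hV⟩ := mem_iUnion.mp hξ
    refine ⟨fun j => Nat.casesOn j v V, ?_⟩
    rw [itf_first, Set.image_comp]
    exact ⟨ξ, hV, rfl⟩

include hsm in
lemma cylT_compact (ω : ℕ → Fin ℓ) (n : ℕ) : IsCompact (cylT g ω n) := by
  induction n generalizing ω with
  | zero =>
    rcases isEmpty_or_nonempty ((j : ℕ) → Fin (k (ω j))) with he | hne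
    · simp only [cylT]
      rw [Set.iUnion_of_empty]
      exact isCompact_empty
    · simp only [cylT, itf]
      rw [Set.iUnion_const]
      exact isCompact_Icc.image continuous_id
  | succ n ih =>
    rw [cylT_succ]
    exact isCompact_iUnion fun v =>
      ((ih _).image (hsm (ω 0) v).continuous)

section MeasureLemmas

variable {pv : (i : Fin ℓ) → Fin (k i) → ℝ}
variable {μ : (ℕ → Fin ℓ) → Measure ℝ}
variable (hμprob : ∀ ω, IsProbabilityMeasure (μ ω))
variable (hμsupp : ∀ ω, μ ω (Set.Icc (0:ℝ) 1) = 1)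
variable (hμss : ∀ ω, μ ω = ∑ u : Fin (k (ω 0)),
      ENNReal.ofReal (pv (ω 0) u) • Measure.map (g (ω 0) u) (μ fun j => ω (j + 1)))
variable (hpv : ∀ i, (∀ u, 0 < pv i u) ∧ ∑ u, pv i u = 1)
variable (hsep : ∀ i, ∀ u v : Fin (k i), u ≠ v →
      Disjoint (g i u '' Set.Icc (0:ℝ) 1) (g i v '' Set.Icc (0:ℝ) 1))

include hμprob hμsupp in
lemma compl_null (ω : ℕ → Fin ℓ) : μ ω (Icc (0:ℝ) 1)ᶜ = 0 := by
  haveI := hμprob ω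
  rw [measure_compl measurableSet_Icc (measure_ne_top _ _), hμsupp ω, measure_univ,
    tsub_self]

include hμprob hμsupp in
lemma meas_inter_Icc (ω : ℕ → Fin ℓ) (S : Set ℝ) : μ ω S ≤ μ ω (S ∩ Icc (0:ℝ) 1) := by
  calc μ ω S ≤ μ ω ((S ∩ Icc (0:ℝ) 1) ∪ (Icc (0:ℝ) 1)ᶜ) := by
        apply measure_mono; intro z hz
        by_cases hzI : z ∈ Icc (0:ℝ) 1
        · exact Or.inl ⟨hz, hzI⟩
        · exact Or.inr hzI
    _ ≤ μ ω (S ∩ Icc (0:ℝ) 1) + μ ω (Icc (0:ℝ) 1)ᶜ := measure_union_le _ _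
    _ = μ ω (S ∩ Icc (0:ℝ) 1) := by rw [compl_null hμprob hμsupp ω, add_zero]

include hsm hk hμprob hμsupp hμss hpv in
lemma cylT_full (n : ℕ) : ∀ ω : ℕ → Fin ℓ, μ ω (cylT g ω n) = 1 := by
  induction n with
  | zero => intro ω; rw [cylT_zero g hk ω]; exact hμsupp ω
  | succ n ih =>
    intro ω
    haveI := hμprob ω
    apply le_antisymm (prob_le_one)
    have hmeas : MeasurableSet (cylT g ω (n + 1)) :=
      (cylT_compact g hsm ω (n+1)).isClosed.measurableSet
    rw [hμss ω, Measure.finset_sum_apply]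
    have hterm : ∀ v : Fin (k (ω 0)),
        ENNReal.ofReal (pv (ω 0) v) ≤
        (ENNReal.ofReal (pv (ω 0) v) • Measure.map (g (ω 0) v) (μ fun j => ω (j + 1)))
          (cylT g ω (n + 1)) := by
      intro v
      rw [Measure.smul_apply, smul_eq_mul,
        Measure.map_apply (hsm (ω 0) v).continuous.measurable hmeas]
      have hsub : cylT g (fun j => ω (j + 1)) n ⊆
          g (ω 0) v ⁻¹' cylT g ω (n + 1) := by
        intro z hz
        simp only [Set.mem_preimage]
        rw [cylT_succ]
        exact mem_iUnion.mpr ⟨v, z, hz, rfl⟩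
      calc ENNReal.ofReal (pv (ω 0) v)
          = ENNReal.ofReal (pv (ω 0) v) * μ (fun j => ω (j + 1)) (cylT g (fun j => ω (j+1)) n) := by
            rw [ih (fun j => ω (j + 1)), mul_one]
        _ ≤ _ := mul_le_mul_right (measure_mono hsub) _
    calc (1:ENNReal) = ENNReal.ofReal (∑ v : Fin (k (ω 0)), pv (ω 0) v) := by
          rw [(hpv (ω 0)).2, ENNReal.ofReal_one]
      _ = ∑ v : Fin (k (ω 0)), ENNReal.ofReal (pv (ω 0) v) := by
          rw [ENNReal.ofReal_sum_of_nonneg (fun v _ => ((hpv (ω 0)).1 v).le)]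
      _ ≤ _ := Finset.sum_le_sum (fun v _ => hterm v)

include hsm hmaps hρ₀ hcontr hμprob hμsupp hμss hpv hsep in
lemma cyl_measure (n : ℕ) : ∀ (ω : ℕ → Fin ℓ) (U : (j : ℕ) → Fin (k (ω j))),
    μ ω (itf g ω U n '' Icc (0:ℝ) 1) =
      ∏ j ∈ Finset.range n, ENNReal.ofReal (pv (ω j) (U j)) := by
  induction n with
  | zero =>
    intro ω U
    simp only [itf, Set.image_id, Finset.range_zero, Finset.prod_empty]
    exact hμsupp ω
  | succ n ih =>
    intro ω U
    rw [itf_first, Set.image_comp]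
    set ω' := fun j => ω (j + 1) with hω'
    set U' : (j : ℕ) → Fin (k (ω' j)) := fun j => U (j + 1) with hU'
    set A := itf g ω' U' n '' Icc (0:ℝ) 1 with hA
    have hAsub : A ⊆ Icc (0:ℝ) 1 := by
      rintro z ⟨w, hw, rfl⟩; exact itf_mapsTo g hmaps ω' U' n hw
    have hmeasS : MeasurableSet (g (ω 0) (U 0) '' A) :=
      (((itf_image_compact g hsm ω' U' n).image
        (hsm (ω 0) (U 0)).continuous).isClosed).measurableSet
    rw [hμss ω, Measure.finset_sum_apply]
    have hmain : (ENNReal.ofReal (pv (ω 0) (U 0)) •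
        Measure.map (g (ω 0) (U 0)) (μ ω')) (g (ω 0) (U 0) '' A) =
        ENNReal.ofReal (pv (ω 0) (U 0)) * μ ω' A := by
      rw [Measure.smul_apply, smul_eq_mul,
        Measure.map_apply (hsm (ω 0) (U 0)).continuous.measurable hmeasS]
      congr 1
      apply le_antisymm
      · calc μ ω' (g (ω 0) (U 0) ⁻¹' (g (ω 0) (U 0) '' A))
            ≤ μ ω' ((g (ω 0) (U 0) ⁻¹' (g (ω 0) (U 0) '' A)) ∩ Icc (0:ℝ) 1) :=
              meas_inter_Icc hμprob hμsupp ω' _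
          _ ≤ μ ω' A := by
              apply measure_mono
              rintro z ⟨hz1, hz2⟩
              obtain ⟨w, hw, hww⟩ := hz1
              rwa [← g_injOn g hsm hρ₀ hcontr (ω 0) (U 0) (hAsub hw) hz2 hww]
      · exact measure_mono (Set.subset_preimage_image _ _)
    have hzero : ∀ v : Fin (k (ω 0)), v ≠ U 0 →
        (ENNReal.ofReal (pv (ω 0) v) •
          Measure.map (g (ω 0) v) (μ ω')) (g (ω 0) (U 0) '' A) = 0 := by
      intro v hv
      rw [Measure.smul_apply, smul_eq_mul,
        Measure.map_apply (hsm (ω 0) v).continuous.measurable hmeasS]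
      have h0 : μ ω' (g (ω 0) v ⁻¹' (g (ω 0) (U 0) '' A)) = 0 := by
        apply le_antisymm _ zero_le
        calc μ ω' (g (ω 0) v ⁻¹' (g (ω 0) (U 0) '' A))
            ≤ μ ω' ((g (ω 0) v ⁻¹' (g (ω 0) (U 0) '' A)) ∩ Icc (0:ℝ) 1) :=
              meas_inter_Icc hμprob hμsupp ω' _
          _ = 0 := by
              convert measure_empty
              · ext z
                simp only [Set.mem_inter_iff, Set.mem_preimage, Set.mem_empty_iff_false,
                  iff_false]
                rintro ⟨hz1, hz2⟩
                exact Set.disjoint_left.mp (hsep (ω 0) v (U 0) hv)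
                  ⟨z, hz2, rfl⟩ (Set.image_mono hAsub hz1)
              · infer_instance
        done
      rw [h0, mul_zero]
    rw [Finset.sum_eq_single (U 0)]
    · rw [hmain, ih ω' U', Finset.prod_range_succ']
      ring
    · intro v _ hv; exact hzero v hv
    · intro h; exact absurd (Finset.mem_univ _) h

end MeasureLemmas

end Analytic

end FedererAux

set_option maxHeartbeats 1000000 in
open FedererAux in
/-- Theorem 2.5 (6), Federer property: for a strongly separated model of
uniformly contracting `C²` IFSs on `[0,1]` with strictly positive probability vectors and
associated random measures `μ_ω`, for every `D > 1` there is `C_D > 0`, uniform in `ω`,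
such that `μ_ω(B(x, Dr)) ≤ C_D μ_ω(B(x, r))` for every `x ∈ supp μ_ω` and `r > 0`. -/
theorem model_measures_federer
    (ℓ : ℕ) (hℓ : 0 < ℓ) (k : Fin ℓ → ℕ) (hk : ∀ i, 0 < k i)
    (g : (i : Fin ℓ) → Fin (k i) → ℝ → ℝ)
    (hsm : ∀ i u, ContDiff ℝ 2 (g i u))
    (hmaps : ∀ i u, Set.MapsTo (g i u) (Set.Icc (0:ℝ) 1) (Set.Icc (0:ℝ) 1))
    (ρ₀ ρ₁ : ℝ) (hρ₀ : 0 < ρ₀) (hρ₁ : ρ₁ < 1)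
    (hcontr : ∀ i u, ∀ x ∈ Set.Icc (0:ℝ) 1, ρ₀ ≤ |deriv (g i u) x| ∧ |deriv (g i u) x| ≤ ρ₁)
    (hsep : ∀ i, ∀ u v : Fin (k i), u ≠ v →
      Disjoint (g i u '' Set.Icc (0:ℝ) 1) (g i v '' Set.Icc (0:ℝ) 1))
    (pv : (i : Fin ℓ) → Fin (k i) → ℝ)
    (hpv : ∀ i, (∀ u, 0 < pv i u) ∧ ∑ u, pv i u = 1)
    -- the random measures `μ_ω = (Π_ω)_* η^{(ω)}` of the model
    (μ : (ℕ → Fin ℓ) → Measure ℝ)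
    (hμprob : ∀ ω, IsProbabilityMeasure (μ ω))
    (hμsupp : ∀ ω, μ ω (Set.Icc (0:ℝ) 1) = 1)
    (hμss : ∀ ω, μ ω = ∑ u : Fin (k (ω 0)),
      ENNReal.ofReal (pv (ω 0) u) • Measure.map (g (ω 0) u) (μ fun j => ω (j + 1))) :
    ∀ D : ℝ, 1 < D → ∃ C_D : ℝ, 0 < C_D ∧
      ∀ (ω : ℕ → Fin ℓ) (x r : ℝ), 0 < r →
        (∀ t : ℝ, 0 < t → 0 < μ ω (Metric.ball x t)) →
        μ ω (Metric.ball x (D * r)) ≤ ENNReal.ofReal C_D * μ ω (Metric.ball x r) := by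
  classical
  intro D hD
  have h0I : (0:ℝ) ∈ Icc (0:ℝ) 1 := by norm_num
  have h1I : (1:ℝ) ∈ Icc (0:ℝ) 1 := by norm_num
  -- basic constants
  obtain ⟨i₀⟩ : Nonempty (Fin ℓ) := ⟨⟨0, hℓ⟩⟩
  have hne : ∀ i, Nonempty (Fin (k i)) := fun i => ⟨⟨0, hk i⟩⟩
  have hρ01 : ρ₀ ≤ ρ₁ := by
    obtain ⟨h1, h2⟩ := hcontr i₀ (hne i₀).some 0 h0I
    linarith
  have hρ₁pos : 0 < ρ₁ := lt_of_lt_of_le hρ₀ hρ01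
  -- Lipschitz constant for the derivatives
  obtain ⟨K, hK0, hlip⟩ : ∃ K, 0 ≤ K ∧ ∀ i u, ∀ x ∈ Icc (0:ℝ) 1, ∀ y ∈ Icc (0:ℝ) 1,
      |deriv (g i u) x - deriv (g i u) y| ≤ K * |x - y| := by
    have hCex : ∀ p : Σ i : Fin ℓ, Fin (k i), ∃ C, 0 ≤ C ∧
        ∀ x ∈ Icc (0:ℝ) 1, ∀ y ∈ Icc (0:ℝ) 1,
          |deriv (g p.1 p.2) x - deriv (g p.1 p.2) y| ≤ C * |x - y| := by
      rintro ⟨i, u⟩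
      have h2 : ContDiff ℝ ((1:ℕ) + 1) (g i u) := by exact_mod_cast hsm i u
      have hd1 : ContDiff ℝ 1 (deriv (g i u)) := (contDiff_succ_iff_deriv.mp h2).2.2
      have hd2c : Continuous (deriv (deriv (g i u))) := hd1.continuous_deriv le_rfl
      obtain ⟨C0, hC0⟩ := isCompact_Icc.exists_bound_of_continuousOn
        (hd2c.continuousOn (s := Icc (0:ℝ) 1))
      refine ⟨max C0 0, le_max_right _ _, ?_⟩
      intro x hx y hy
      obtain ⟨ξ, hξ, he⟩ := mvt_uIcc (deriv (g i u)) hd1 y x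
      have hξI : ξ ∈ Icc (0:ℝ) 1 := uIcc_sub_Icc hy hx hξ
      rw [he, abs_mul]
      apply mul_le_mul _ _ (abs_nonneg _) (le_max_right _ _)
      · exact le_trans (hC0 ξ hξI) (le_max_left _ _)
      · rw [abs_sub_comm]
    choose Cf hCf using hCex
    refine ⟨Finset.univ.sup' ⟨⟨i₀, (hne i₀).some⟩, Finset.mem_univ _⟩ Cf, ?_, ?_⟩
    · exact le_trans (hCf ⟨i₀, (hne i₀).some⟩).1
        (Finset.le_sup' Cf (Finset.mem_univ _))
    · intro i u x hx y hy
      refine le_trans ((hCf ⟨i, u⟩).2 x hx y hy) ?_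
      exact mul_le_mul_of_nonneg_right (Finset.le_sup' Cf (Finset.mem_univ ⟨i, u⟩))
        (abs_nonneg _)
  -- distortion constant
  set E : ℝ := Real.exp (K / ρ₀ * (1 / (1 - ρ₁))) with hE
  have hE1 : 1 ≤ E := by
    rw [hE]
    have h1ρ : (0:ℝ) < 1 - ρ₁ := by linarith
    exact Real.one_le_exp
      (mul_nonneg (div_nonneg hK0 hρ₀.le) (one_div_pos.mpr h1ρ).le)
  have hEpos : 0 < E := lt_of_lt_of_le one_pos hE1
  have hEub : ∀ n : ℕ, Real.exp (K / ρ₀ * ∑ i ∈ Finset.range n, ρ₁ ^ i) ≤ E := by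
    intro n
    rw [hE]
    apply Real.exp_le_exp.mpr
    apply mul_le_mul_of_nonneg_left _ (div_nonneg hK0 hρ₀.le)
    have h1ρ : (0:ℝ) < 1 - ρ₁ := by linarith
    have hsum : ∑ i ∈ Finset.range n, ρ₁ ^ i = (ρ₁ ^ n - 1) / (ρ₁ - 1) :=
      geom_sum_eq (ne_of_lt hρ₁) n
    rw [hsum, show (ρ₁ ^ n - 1) / (ρ₁ - 1) = (1 - ρ₁ ^ n) / (1 - ρ₁) by
      rw [← neg_sub (1:ℝ) (ρ₁ ^ n), ← neg_sub (1:ℝ) ρ₁, neg_div_neg_eq]]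
    gcongr <;> first
      | linarith
      | nlinarith [pow_nonneg hρ₁pos.le n]
  -- separation constant
  obtain ⟨γ, hγpos, hγ⟩ : ∃ γ > 0, ∀ i, ∀ u v : Fin (k i), u ≠ v →
      ∀ a ∈ g i u '' Icc (0:ℝ) 1, ∀ b ∈ g i v '' Icc (0:ℝ) 1, γ ≤ |a - b| := by
    have hgam : ∀ p : Σ i : Fin ℓ, Fin (k i) × Fin (k i), ∃ γ0, 0 < γ0 ∧
        (p.2.1 ≠ p.2.2 → ∀ a ∈ g p.1 p.2.1 '' Icc (0:ℝ) 1,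
          ∀ b ∈ g p.1 p.2.2 '' Icc (0:ℝ) 1, γ0 ≤ |a - b|) := by
      rintro ⟨i, u, v⟩
      by_cases huv : u = v
      · exact ⟨1, one_pos, fun h => absurd huv h⟩
      · have hS : IsCompact (g i u '' Icc (0:ℝ) 1) :=
          isCompact_Icc.image (hsm i u).continuous
        have hT : IsCompact (g i v '' Icc (0:ℝ) 1) :=
          isCompact_Icc.image (hsm i v).continuous
        have hSne : (g i u '' Icc (0:ℝ) 1).Nonempty :=
          (Set.nonempty_Icc.mpr zero_le_one).image _
        have hTne : (g i v '' Icc (0:ℝ) 1).Nonempty :=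
          (Set.nonempty_Icc.mpr zero_le_one).image _
        obtain ⟨z0, hz0mem, hz0min⟩ := (hS.prod hT).exists_isMinOn (hSne.prod hTne)
          (((continuous_fst.sub continuous_snd).abs).continuousOn)
        refine ⟨|z0.1 - z0.2|, ?_, ?_⟩
        · rw [abs_pos, sub_ne_zero]
          intro hzz
          exact Set.disjoint_left.mp (hsep i u v huv) hz0mem.1 (hzz ▸ hz0mem.2)
        · intro _ a ha b hb
          exact hz0min (Set.mk_mem_prod ha hb)
    choose γf hγf using hgam
    refine ⟨Finset.univ.inf' ⟨⟨i₀, (hne i₀).some, (hne i₀).some⟩, Finset.mem_univ _⟩ γf,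
      ?_, ?_⟩
    · exact (Finset.lt_inf'_iff _).mpr fun p _ => (hγf p).1
    · intro i u v huv a ha b hb
      exact le_trans (Finset.inf'_le γf (Finset.mem_univ ⟨i, u, v⟩))
        ((hγf ⟨i, u, v⟩).2 huv a ha b hb)
  -- minimal probability
  obtain ⟨pm, hpm0, hpm1, hpmle⟩ : ∃ pm : ℝ, 0 < pm ∧ pm ≤ 1 ∧ ∀ i u, pm ≤ pv i u := by
    refine ⟨min (Finset.univ.inf' ⟨⟨i₀, (hne i₀).some⟩, Finset.mem_univ _⟩
      (fun p : Σ i : Fin ℓ, Fin (k i) => pv p.1 p.2)) 1, ?_, min_le_right _ _, ?_⟩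
    · exact lt_min ((Finset.lt_inf'_iff _).mpr fun p _ => (hpv p.1).1 p.2) one_pos
    · intro i u
      exact le_trans (min_le_left _ _)
        (Finset.inf'_le (fun p : Σ i : Fin ℓ, Fin (k i) => pv p.1 p.2)
          (Finset.mem_univ ⟨i, u⟩))
  -- choice of the number of generations to go up
  obtain ⟨s, hs⟩ : ∃ s : ℕ, E ^ 3 * D * ρ₁ ^ (s + 1) ≤ γ * ρ₀ := by
    have hED : 0 < E ^ 3 * D := by positivity
    obtain ⟨N, hN⟩ := exists_pow_lt_of_lt_one (div_pos (mul_pos hγpos hρ₀) hED) hρ₁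
    refine ⟨N, ?_⟩
    have h1 : ρ₁ ^ (N + 1) < γ * ρ₀ / (E ^ 3 * D) := by
      apply lt_of_le_of_lt _ hN
      rw [pow_succ]
      nlinarith [pow_pos hρ₁pos N]
    rw [lt_div_iff₀ hED] at h1
    nlinarith [h1]
  refine ⟨(pm ^ s)⁻¹, by positivity, ?_⟩
  intro ω x r hr hpos
  haveI := hμprob ω
  -- `x` belongs to every generation's union of cylinders
  have hxT : ∀ nn : ℕ, x ∈ cylT g ω nn := by
    intro nn
    by_contra hx
    have hcl : IsClosed (cylT g ω nn) := (cylT_compact g hsm ω nn).isClosed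
    obtain ⟨ε, hε, hball⟩ := Metric.isOpen_iff.mp hcl.isOpen_compl x hx
    have h1 : μ ω (Metric.ball x ε) ≤ μ ω (cylT g ω nn)ᶜ := measure_mono hball
    have h2 : μ ω (cylT g ω nn)ᶜ = 0 := by
      rw [measure_compl hcl.measurableSet (measure_ne_top _ _),
        cylT_full g hsm hk hμprob hμsupp hμss hpv nn ω, measure_univ, tsub_self]
    exact absurd (lt_of_lt_of_le (hpos ε hε) (h1.trans_eq h2)) (lt_irrefl 0)
  have hWex : ∀ nn : ℕ, ∃ V : (j : ℕ) → Fin (k (ω j)), x ∈ itf g ω V nn '' Icc (0:ℝ) 1 :=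
    fun nn => mem_iUnion.mp (hxT nn)
  choose W hW using hWex
  -- the coding of `x`
  set U : (j : ℕ) → Fin (k (ω j)) := fun j => W (j + 1) j with hUdef
  have hUW : ∀ nn l, l < nn → W nn l = U l := by
    intro nn l hl
    have h1 : x ∈ itf g ω (W nn) (l + 1) '' Icc (0:ℝ) 1 :=
      itf_image_nested g hmaps ω (W nn) (by omega : l + 1 ≤ nn) (hW nn)
    exact word_unique g hsm hmaps hρ₀ hcontr hsep (l + 1) ω (W nn) (W (l + 1)) x
      h1 (hW (l + 1)) l (by omega)
  have hU : ∀ nn : ℕ, x ∈ itf g ω U nn '' Icc (0:ℝ) 1 := by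
    intro nn
    rw [itf_congr g ω U (W nn) nn (fun l hl => (hUW nn l hl).symm)]
    exact hW nn
  -- the diameters of the cylinders of x
  set d : ℕ → ℝ := fun nn => |itf g ω U nn 1 - itf g ω U nn 0| with hddef
  have hdub : ∀ nn, d nn ≤ ρ₁ ^ nn := by
    intro nn
    have h1 := (itf_bound g hsm hmaps hρ₀ hcontr ω U nn h0I h1I).2
    simpa using h1
  have hdlb : ∀ nn, ρ₀ ^ nn ≤ d nn := by
    intro nn
    have h1 := (itf_bound g hsm hmaps hρ₀ hcontr ω U nn h0I h1I).1
    simpa using h1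
  have hdpos : ∀ nn, 0 < d nn := fun nn => lt_of_lt_of_le (pow_pos hρ₀ nn) (hdlb nn)
  have hrE : 0 < r / E := div_pos hr hEpos
  have hex : ∃ nn, d nn < r / E := by
    obtain ⟨N, hN⟩ := exists_pow_lt_of_lt_one hrE hρ₁
    exact ⟨N, lt_of_le_of_lt (hdub N) hN⟩
  set n := Nat.find hex with hn
  have hdn : d n < r / E := Nat.find_spec hex
  have hminn : ∀ l, l < n → r / E ≤ d l := fun l hl => not_lt.mp (Nat.find_min hex hl)
  -- lower bound for the small ball
  have hCn_sub : itf g ω U n '' Icc (0:ℝ) 1 ⊆ Metric.ball x r := by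
    rintro z ⟨a, ha, rfl⟩
    obtain ⟨b, hb, hxb⟩ := hU n
    rw [Metric.mem_ball, Real.dist_eq, ← hxb]
    have hdist := itf_distortion g hsm hmaps hρ₀ hcontr K hK0 hlip n ω U ha hb h1I h0I
      zero_le_one (by simpa using abs_sub_le_one_of_Icc ha hb)
    calc |itf g ω U n a - itf g ω U n b|
        ≤ Real.exp (K / ρ₀ * ∑ i ∈ Finset.range n, ρ₁ ^ i) * 1 *
          |itf g ω U n 1 - itf g ω U n 0| := hdist
      _ ≤ E * d n := by
          rw [mul_one]
          exact mul_le_mul_of_nonneg_right (hEub n) (abs_nonneg _)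
      _ < E * (r / E) := by
          exact (mul_lt_mul_iff_right₀ hEpos).mpr hdn
      _ = r := by field_simp
  have hlower : (∏ j ∈ Finset.range n, ENNReal.ofReal (pv (ω j) (U j))) ≤
      μ ω (Metric.ball x r) := by
    rw [← cyl_measure g hsm hmaps hρ₀ hcontr hμprob hμsupp hμss hpv hsep n ω U]
    exact measure_mono hCn_sub
  -- upper bound for the large ball
  set m := n - s with hmdef
  have hnm : m ≤ n := Nat.sub_le _ _
  have hball_sub : Metric.ball x (D * r) ∩ cylT g ω m ⊆ itf g ω U m '' Icc (0:ℝ) 1 := by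
    rintro y ⟨hyb, hyT⟩
    obtain ⟨V, hyV⟩ := mem_iUnion.mp hyT
    by_cases hVU : ∀ l, l < m → V l = U l
    · rwa [itf_congr g ω V U m hVU] at hyV
    · exfalso
      push_neg at hVU
      obtain ⟨l0, hl0m, hl0ne⟩ := hVU
      have hjex : ∃ j, V j ≠ U j := ⟨l0, hl0ne⟩
      set j := Nat.find hjex with hjdef
      have hVj : V j ≠ U j := Nat.find_spec hjex
      have hVl : ∀ l, l < j → V l = U l := fun l hl => not_not.mp (Nat.find_min hjex hl)
      have hjm : j < m := lt_of_le_of_lt (Nat.find_min' hjex hl0ne) hl0m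
      have hjn : j < n := lt_of_lt_of_le hjm hnm
      -- split the cylinders at generation j
      obtain ⟨a, haI, hxa⟩ := hU n
      have hsplitn : itf g ω U n =
          itf g ω U j ∘ itf g (fun l => ω (j + l)) (fun l => U (j + l)) (n - j) := by
        have h1 := itf_split g ω U j (n - j)
        rwa [Nat.add_sub_cancel' hjn.le] at h1
      obtain ⟨c, hcI, hyc⟩ := hyV
      have hsplitm : itf g ω V m =
          itf g ω U j ∘ itf g (fun l => ω (j + l)) (fun l => V (j + l)) (m - j) := by
        have h1 := itf_split g ω V j (m - j)
        rw [Nat.add_sub_cancel' hjm.le] at h1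
        rw [h1, itf_congr g ω V U j hVl]
      set Q := itf g (fun l => ω (j + l)) (fun l => U (j + l)) (n - j) with hQ
      set R := itf g (fun l => ω (j + l)) (fun l => V (j + l)) (m - j) with hR
      have hmapsQ := itf_mapsTo g hmaps (fun l => ω (j + l)) (fun l => U (j + l)) (n - j)
      have hmapsR := itf_mapsTo g hmaps (fun l => ω (j + l)) (fun l => V (j + l)) (m - j)
      have hαI : Q a ∈ Icc (0:ℝ) 1 := hmapsQ haI
      have hβI : R c ∈ Icc (0:ℝ) 1 := hmapsR hcI
      have hxPα : itf g ω U j (Q a) = x := by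
        rw [hsplitn] at hxa; exact hxa
      have hyPβ : itf g ω U j (R c) = y := by
        rw [hsplitm] at hyc; exact hyc
      -- Q a and R c lie in disjoint first-level sub-intervals
      have hαmem : Q a ∈ g (ω j) (U j) '' Icc (0:ℝ) 1 := by
        obtain ⟨t1, ht1⟩ : ∃ t1, n - j = t1 + 1 := ⟨n - j - 1, by omega⟩
        rw [hQ, ht1, itf_first]
        exact ⟨itf g _ _ t1 a,
          itf_mapsTo g hmaps (fun l => ω (j + (l + 1))) (fun l => U (j + (l + 1))) t1 haI, rfl⟩
      have hβmem : R c ∈ g (ω j) (V j) '' Icc (0:ℝ) 1 := by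
        obtain ⟨t1, ht1⟩ : ∃ t1, m - j = t1 + 1 := ⟨m - j - 1, by omega⟩
        rw [hR, ht1, itf_first]
        exact ⟨itf g _ _ t1 c,
          itf_mapsTo g hmaps (fun l => ω (j + (l + 1))) (fun l => V (j + (l + 1))) t1 hcI, rfl⟩
      have hγαβ : γ ≤ |Q a - R c| :=
        hγ (ω j) (U j) (V j) (Ne.symm hVj) (Q a) hαmem (R c) hβmem
      set B := ρ₁ ^ (n - j) with hB
      have hBpos : 0 < B := pow_pos hρ₁pos _
      -- first distortion estimate : d n ≤ E * (B/γ) * |x - y|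
      have hQ10 : |Q 1 - Q 0| ≤ B := by
        have h1 := (itf_bound g hsm hmaps hρ₀ hcontr (fun l => ω (j + l))
          (fun l => U (j + l)) (n - j) h0I h1I).2
        simpa using h1
      have hQ1I : Q 1 ∈ Icc (0:ℝ) 1 := hmapsQ h1I
      have hQ0I : Q 0 ∈ Icc (0:ℝ) 1 := hmapsQ h0I
      have htc : |Q 1 - Q 0| ≤ (B / γ) * |Q a - R c| := by
        calc |Q 1 - Q 0| ≤ B := hQ10
          _ = B / γ * γ := by field_simp
          _ ≤ B / γ * |Q a - R c| :=
              mul_le_mul_of_nonneg_left hγαβ (by positivity)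
      have hdist2 := itf_distortion g hsm hmaps hρ₀ hcontr K hK0 hlip j ω U
        hQ1I hQ0I hαI hβI (by positivity : (0:ℝ) ≤ B / γ) htc
      rw [hxPα, hyPβ] at hdist2
      have hdn_xy : d n ≤ E * (B / γ) * |x - y| := by
        have e1 : d n = |itf g ω U j (Q 1) - itf g ω U j (Q 0)| := by
          show |itf g ω U n 1 - itf g ω U n 0| = _
          rw [hsplitn]; rfl
        rw [e1]
        refine le_trans hdist2 ?_
        gcongr
        exact hEub j
      -- second estimate : ρ₀ * r ≤ E^2 * d n
      have hrE_dn : ρ₀ * r ≤ E ^ 2 * d n := by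
        have hn1 : 1 ≤ n := by omega
        obtain ⟨t2, ht2⟩ : ∃ t2, n = t2 + 1 := ⟨n - 1, by omega⟩
        have hprev : r / E ≤ d t2 := hminn t2 (by omega)
        have hg10 : |(1:ℝ) - 0| ≤ 1 / ρ₀ *
            |g (ω t2) (U t2) 1 - g (ω t2) (U t2) 0| := by
          have h1 := (onestep g hsm hcontr (ω t2) (U t2) h0I h1I).1
          rw [sub_zero, abs_one, mul_one] at h1
          rw [sub_zero, abs_one, one_div, inv_mul_eq_div, le_div_iff₀ hρ₀, one_mul]
          exact h1
        have hga := hmaps (ω t2) (U t2) h0I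
        have hgb := hmaps (ω t2) (U t2) h1I
        have hdist3 := itf_distortion g hsm hmaps hρ₀ hcontr K hK0 hlip t2 ω U
          h1I h0I hgb hga (by positivity : (0:ℝ) ≤ 1 / ρ₀) hg10
        -- |itf t2 1 - itf t2 0| ≤ exp * (1/ρ₀) * |itf t2 (g 1) - itf t2 (g 0)| = ... * d n
        have edn : |itf g ω U t2 (g (ω t2) (U t2) 1) - itf g ω U t2 (g (ω t2) (U t2) 0)|
            = d n := by
          rw [hddef]
          show _ = |itf g ω U n 1 - itf g ω U n 0|
          rw [ht2]
          rfl
        rw [edn] at hdist3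
        have h2 : r / E ≤ E * (1 / ρ₀) * d n := by
          refine le_trans hprev (le_trans hdist3 ?_)
          gcongr
          exact hEub t2
        have h3 : E * (r / E) ≤ E * (E * (1 / ρ₀) * d n) :=
          mul_le_mul_of_nonneg_left h2 hEpos.le
        have h4 : E * (r / E) = r := by field_simp
        have h5 : ρ₀ * (E * (E * (1 / ρ₀) * d n)) = E ^ 2 * d n := by
          field_simp
        have h6 : ρ₀ * r ≤ ρ₀ * (E * (E * (1 / ρ₀) * d n)) := by
          rw [← h4]; exact mul_le_mul_of_nonneg_left h3 hρ₀.le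
        linarith [h5, h6]
      -- conclude: the gap forces |x - y| ≥ D * r
      have hxy : |x - y| < D * r := by
        have h1 := Metric.mem_ball.mp hyb
        rw [Real.dist_eq] at h1
        rw [abs_sub_comm]
        exact h1
      have hBs : B ≤ ρ₁ ^ (s + 1) := by
        rw [hB]
        exact pow_le_pow_of_le_one hρ₁pos.le hρ₁.le (by omega)
      have c0 : γ * d n ≤ E * B * |x - y| := by
        have heq : γ * (E * (B / γ) * |x - y|) = E * B * |x - y| := by
          field_simp
        exact (mul_le_mul_of_nonneg_left hdn_xy hγpos.le).trans_eq heq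
      have e1 : E ^ 3 * D * B * r ≤ γ * ρ₀ * r := by
        have h1 : E ^ 3 * D * B ≤ E ^ 3 * D * ρ₁ ^ (s + 1) :=
          mul_le_mul_of_nonneg_left hBs (by positivity)
        have h2 : E ^ 3 * D * B ≤ γ * ρ₀ := le_trans h1 hs
        exact mul_le_mul_of_nonneg_right h2 hr.le
      have e2 : γ * (ρ₀ * r) ≤ γ * (E ^ 2 * d n) :=
        mul_le_mul_of_nonneg_left hrE_dn hγpos.le
      have e3 : E ^ 2 * (γ * d n) ≤ E ^ 2 * (E * B * |x - y|) :=
        mul_le_mul_of_nonneg_left c0 (by positivity)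
      have e4 : E ^ 3 * D * B * r ≤ E ^ 3 * B * |x - y| := by nlinarith [e1, e2, e3]
      have hEB : 0 < E ^ 3 * B := by positivity
      nlinarith [e4, hEB, hxy, hr]
  -- upper bound for the measure of the large ball
  have hupper : μ ω (Metric.ball x (D * r)) ≤
      ∏ j ∈ Finset.range m, ENNReal.ofReal (pv (ω j) (U j)) := by
    have hTm : MeasurableSet (cylT g ω m) := (cylT_compact g hsm ω m).isClosed.measurableSet
    have hTc : μ ω (cylT g ω m)ᶜ = 0 := by
      rw [measure_compl hTm (measure_ne_top _ _),
        cylT_full g hsm hk hμprob hμsupp hμss hpv m ω, measure_univ, tsub_self]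
    calc μ ω (Metric.ball x (D * r))
        ≤ μ ω ((Metric.ball x (D * r) ∩ cylT g ω m) ∪ (cylT g ω m)ᶜ) := by
          apply measure_mono
          intro z hz
          by_cases h : z ∈ cylT g ω m
          · exact Or.inl ⟨hz, h⟩
          · exact Or.inr h
      _ ≤ μ ω (Metric.ball x (D * r) ∩ cylT g ω m) + μ ω (cylT g ω m)ᶜ :=
          measure_union_le _ _
      _ = μ ω (Metric.ball x (D * r) ∩ cylT g ω m) := by rw [hTc, add_zero]
      _ ≤ μ ω (itf g ω U m '' Icc (0:ℝ) 1) := measure_mono hball_sub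
      _ = _ := cyl_measure g hsm hmaps hρ₀ hcontr hμprob hμsupp hμss hpv hsep m ω U
  -- final ENNReal computation
  set qm := ENNReal.ofReal pm with hqm
  have hqm0 : qm ≠ 0 := by
    rw [hqm, Ne, ENNReal.ofReal_eq_zero]
    exact not_le.mpr hpm0
  have hqmtop : qm ≠ ⊤ := ENNReal.ofReal_ne_top
  have hqmone : qm ≤ 1 := by
    rw [hqm, ← ENNReal.ofReal_one]
    exact ENNReal.ofReal_le_ofReal hpm1
  have hprodle : qm ^ s * (∏ j ∈ Finset.range m, ENNReal.ofReal (pv (ω j) (U j))) ≤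
      ∏ j ∈ Finset.range n, ENNReal.ofReal (pv (ω j) (U j)) := by
    rw [← Finset.prod_range_mul_prod_Ico _ hnm, mul_comm]
    apply mul_le_mul_right
    have hcard : (Finset.Ico m n).card = n - m := Nat.card_Ico m n
    have h1 : qm ^ s ≤ qm ^ (n - m) := by
      have hsm2 : n - m ≤ s := by omega
      obtain ⟨e, he⟩ : ∃ e, s = (n - m) + e := ⟨s - (n - m), by omega⟩
      rw [he, pow_add]
      exact mul_le_of_le_one_right zero_le (pow_le_one' hqmone e)
    refine le_trans h1 ?_
    calc qm ^ (n - m) = ∏ _j ∈ Finset.Ico m n, qm := by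
          rw [Finset.prod_const, hcard]
      _ ≤ _ := Finset.prod_le_prod' fun i _ => by
          rw [hqm]
          exact ENNReal.ofReal_le_ofReal (hpmle (ω i) (U i))
  have hcancel : (qm ^ s)⁻¹ * (qm ^ s * μ ω (Metric.ball x (D * r))) =
      μ ω (Metric.ball x (D * r)) := by
    rw [← mul_assoc, ENNReal.inv_mul_cancel (pow_ne_zero _ hqm0)
      (ENNReal.pow_ne_top hqmtop), one_mul]
  calc μ ω (Metric.ball x (D * r))
      = (qm ^ s)⁻¹ * (qm ^ s * μ ω (Metric.ball x (D * r))) := hcancel.symm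
    _ ≤ (qm ^ s)⁻¹ * (qm ^ s * (∏ j ∈ Finset.range m, ENNReal.ofReal (pv (ω j) (U j)))) :=
        mul_le_mul_right (mul_le_mul_right hupper _) _
    _ ≤ (qm ^ s)⁻¹ * (∏ j ∈ Finset.range n, ENNReal.ofReal (pv (ω j) (U j))) :=
        mul_le_mul_right hprodle _
    _ ≤ (qm ^ s)⁻¹ * μ ω (Metric.ball x r) := mul_le_mul_right hlower _
    _ = ENNReal.ofReal ((pm ^ s)⁻¹) * μ ω (Metric.ball x r) := by
        rw [ENNReal.ofReal_inv_of_pos (pow_pos hpm0 s), ENNReal.ofReal_pow hpm0.le, hqm]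
end
end
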